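/- arXiv:1307.3243 — 3 statements merged into one kernel-verified Lean document; each statement's English description precedes it below -/
import Mathlib

section
/- Let R be a prime, 2-torsion-free ring with center Z, let U be a Lie ideal of R, and let V be an additive subgroup of R such that [V, U] ⊆ V. Then either U ⊆ Z, or V ⊆ Z, or there exists a (two-sided) ideal M of R such that 0 ≠ [M, R] ⊆ V. -/
set_option maxHeartbeats 3200000

/-- The center of the ring `R`: elements commuting with everything. -/
def ringCenter (R : Type*) [Ring R] : Set R := {z : R | ∀ r : R, r * z = z * r}

/-- `R` is a prime ring: for two-sided ideals `I, J` of `R`, `IJ = 0`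
implies `I = 0` or `J = 0`. -/
def IsPrimeRing (R : Type*) [Ring R] : Prop :=
  ∀ I J : AddSubgroup R,
    (∀ r : R, ∀ x ∈ I, r * x ∈ I ∧ x * r ∈ I) →
    (∀ r : R, ∀ y ∈ J, r * y ∈ J ∧ y * r ∈ J) →
    (∀ x ∈ I, ∀ y ∈ J, x * y = 0) → I = ⊥ ∨ J = ⊥

/-- `R` is 2-torsion-free. -/
def TwoTorsionFree (R : Type*) [Ring R] : Prop := ∀ x : R, 2 • x = 0 → x = 0

namespace BHK

variable {R : Type*} [Ring R]

/-- The commutator. -/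
def br (x y : R) : R := x * y - y * x

lemma br_def (x y : R) : br x y = x * y - y * x := rfl

lemma tf2 (htf : TwoTorsionFree R) {x : R} (h : x + x = 0) : x = 0 := by
  apply htf; rw [two_smul]; exact h

lemma br_add_left (x y r : R) : br (x + y) r = br x r + br y r := by
  simp only [br]; noncomm_ring

lemma br_add_right (x y r : R) : br r (x + y) = br r x + br r y := by
  simp only [br]; noncomm_ring

lemma br_neg_left (x r : R) : br (-x) r = -br x r := by simp only [br]; noncomm_ring

lemma br_neg_right (x r : R) : br r (-x) = -br r x := by simp only [br]; noncomm_ring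

lemma br_zero_left (r : R) : br 0 r = 0 := by simp [br]

lemma br_zero_right (r : R) : br r 0 = 0 := by simp [br]

/-- membership in the center via brackets -/
lemma mem_center_of_br {z : R} (h : ∀ r : R, br z r = 0) : z ∈ ringCenter R := by
  intro r
  have := h r
  simp only [br, sub_eq_zero] at this
  exact this.symm

lemma br_eq_zero_of_center {z : R} (h : z ∈ ringCenter R) (r : R) : br z r = 0 := by
  simp only [br, sub_eq_zero]; exact (h r).symm

lemma exists_br_ne_zero {a : R} (h : a ∉ ringCenter R) : ∃ t : R, br a t ≠ 0 := by
  by_contra hc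
  push_neg at hc
  exact h (mem_center_of_br hc)

/-- The additive subgroup of elements `x` with `x * y = 0`. -/
def annR (y : R) : AddSubgroup R := (AddMonoidHom.mulRight y).ker

lemma mem_annR {x y : R} : x ∈ annR y ↔ x * y = 0 := Iff.rfl

/-- The additive subgroup of elements `y` with `x * y = 0`. -/
def annL (x : R) : AddSubgroup R := (AddMonoidHom.mulLeft x).ker

lemma mem_annL {x y : R} : y ∈ annL x ↔ x * y = 0 := Iff.rfl


open AddSubgroup

/-- the two-sided ideal generated by an element (using unitality) -/
def genId (x : R) : AddSubgroup R := closure {z | ∃ r s, z = r * x * s}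

lemma self_mem_genId (x : R) : x ∈ genId x :=
  AddSubgroup.subset_closure ⟨1, 1, by noncomm_ring⟩

lemma genId_ideal (x : R) : ∀ r : R, ∀ p ∈ genId x, r * p ∈ genId x ∧ p * r ∈ genId x := by
  intro r p hp
  constructor
  · refine (show genId x ≤ AddSubgroup.comap (AddMonoidHom.mulLeft r) (genId x) from ?_) hp
    rw [genId, closure_le]
    rintro z ⟨s, t, rfl⟩
    simp only [Set.mem_preimage, SetLike.mem_coe, AddSubgroup.mem_comap, AddMonoidHom.coe_mulLeft]
    exact AddSubgroup.subset_closure ⟨r * s, t, by noncomm_ring⟩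
  · refine (show genId x ≤ AddSubgroup.comap (AddMonoidHom.mulRight r) (genId x) from ?_) hp
    rw [genId, closure_le]
    rintro z ⟨s, t, rfl⟩
    simp only [Set.mem_preimage, SetLike.mem_coe, AddSubgroup.mem_comap, AddMonoidHom.coe_mulRight]
    exact AddSubgroup.subset_closure ⟨s, t * r, by noncomm_ring⟩

lemma prime_mid (hp : IsPrimeRing R) {x y : R} (h : ∀ s : R, x * s * y = 0) :
    x = 0 ∨ y = 0 := by
  have hprod : ∀ p ∈ genId x, ∀ q ∈ genId y, p * q = 0 := by
    have main : ∀ q ∈ ({z | ∃ r s, z = r * y * s} : Set R), ∀ p ∈ genId x, p * q = 0 := by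
      rintro q ⟨u, v, rfl⟩ p hp
      refine (show genId x ≤ (AddMonoidHom.mulRight (u * y * v)).ker from ?_) hp
      rw [genId, closure_le]
      rintro z ⟨s, t, rfl⟩
      simp only [SetLike.mem_coe, AddMonoidHom.mem_ker, AddMonoidHom.coe_mulRight]
      calc s * x * t * (u * y * v) = s * (x * (t * u) * y) * v := by noncomm_ring
        _ = 0 := by rw [h (t * u)]; noncomm_ring
    intro p hp q hq
    refine (show genId y ≤ (AddMonoidHom.mulLeft p).ker from ?_) hq
    rw [genId, closure_le]
    intro z hz
    simp only [SetLike.mem_coe, AddMonoidHom.mem_ker, AddMonoidHom.coe_mulLeft]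
    exact main z hz p hp
  rcases hp (genId x) (genId y) (genId_ideal x) (genId_ideal y) hprod with h0 | h0
  · left; have := self_mem_genId x; rw [h0] at this; simpa using this
  · right; have := self_mem_genId y; rw [h0] at this; simpa using this

lemma prime_pick (hp : IsPrimeRing R) {x y : R} (hy : y ≠ 0)
    (h : ∀ s : R, x * s * y = 0) : x = 0 :=
  (prime_mid hp h).resolve_right hy

lemma prime_pick' (hp : IsPrimeRing R) {x y : R} (hx : x ≠ 0)
    (h : ∀ s : R, x * s * y = 0) : y = 0 :=
  (prime_mid hp h).resolve_left hx

/-- a nonzero central element is (left) cancellable -/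
lemma central_cancel (hp : IsPrimeRing R) {c x : R} (hc : c ∈ ringCenter R)
    (hc0 : c ≠ 0) (h : c * x = 0) : x = 0 := by
  refine prime_pick' hp hc0 fun s => ?_
  calc c * s * x = s * (c * x) := by rw [← hc s]; noncomm_ring
    _ = 0 := by rw [h, mul_zero]

lemma central_cancel' (hp : IsPrimeRing R) {c x : R} (hc : c ∈ ringCenter R)
    (hc0 : c ≠ 0) (h : x * c = 0) : x = 0 := by
  refine prime_pick hp hc0 fun s => ?_
  calc x * s * c = x * (s * c) := by noncomm_ring
    _ = x * (c * s) := by rw [hc s]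
    _ = (x * c) * s := by noncomm_ring
    _ = 0 := by rw [h, zero_mul]

/-- an element commuting with a nonzero ideal is central -/
lemma ideal_centralizer (hp : IsPrimeRing R) (N : AddSubgroup R)
    (hNid : ∀ r : R, ∀ n ∈ N, r * n ∈ N ∧ n * r ∈ N)
    {n₀ : R} (hn₀ : n₀ ∈ N) (hn₀0 : n₀ ≠ 0)
    {x : R} (h : ∀ n ∈ N, br x n = 0) : x ∈ ringCenter R := by
  apply mem_center_of_br
  intro s
  -- n * (br x s) = 0 for every n ∈ N
  have key : ∀ n ∈ N, n * br x s = 0 := by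
    intro n hn
    have h1 : br x (n * s) = 0 := h _ ((hNid s n hn).2)
    have h2 : br x n = 0 := h n hn
    have : n * br x s = br x (n * s) - (br x n) * s := by simp only [br]; noncomm_ring
    rw [this, h1, h2, zero_mul, sub_zero]
  refine prime_pick' hp hn₀0 fun t => ?_
  have : n₀ * t ∈ N := (hNid t n₀ hn₀).2
  calc n₀ * t * br x s = (n₀ * t) * br x s := by noncomm_ring
    _ = 0 := key _ this

/-- either `R` is 3-torsion-free or `3 = 0` in `R` -/
lemma three_cases (hp : IsPrimeRing R) :
    (∀ x : R, x + x + x = 0 → x = 0) ∨ (∀ x : R, x + x + x = 0) := by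
  by_cases h3 : ∀ x : R, x + x + x = 0
  · exact Or.inr h3
  · left
    push_neg at h3
    obtain ⟨x₀, hx₀⟩ := h3
    intro x hx
    -- x ∈ I := {x | 3x = 0}; y₀ := 3x₀ ≠ 0 ∈ J; I * J-style: use prime_mid directly:
    -- x * s * (x₀+x₀+x₀) = (x*s*x₀)+(x*s*x₀)+(x*s*x₀) = (x+x+x)*s*x₀ = 0
    refine prime_pick hp (y := x₀ + x₀ + x₀) hx₀ fun s => ?_
    calc x * s * (x₀ + x₀ + x₀) = (x + x + x) * (s * x₀) := by noncomm_ring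
      _ = 0 := by rw [hx, zero_mul]


/-- L2: if `[u,[u,r]] = 0` for all `r`, then `u` is central. -/
lemma L2 (hp : IsPrimeRing R) (htf : TwoTorsionFree R) {u : R}
    (h : ∀ r : R, br u (br u r) = 0) : u ∈ ringCenter R := by
  have hdd : ∀ r s : R, br u r * br u s = 0 := by
    intro r s
    have key : br u (br u (r * s)) =
        br u (br u r) * s + (br u r * br u s + br u r * br u s) + r * br u (br u s) := by
      simp only [br]; noncomm_ring
    rw [h, h, h, zero_mul, mul_zero, zero_add, add_zero] at key
    exact tf2 htf key.symm
  have hmid : ∀ r t s : R, br u r * t * br u s = 0 := by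
    intro r t s
    have key : br u (r * t) * br u s = br u r * t * br u s + r * (br u t * br u s) := by
      simp only [br]; noncomm_ring
    rw [hdd, hdd, mul_zero, add_zero] at key
    exact key.symm
  apply mem_center_of_br
  intro r
  rcases prime_mid hp (fun t => hmid r t r) with h0 | h0 <;> exact h0

/-- L1: an element commuting with a noncentral Lie ideal is central. -/
lemma L1 (hp : IsPrimeRing R) (htf : TwoTorsionFree R) (U : AddSubgroup R)
    (hU : ∀ u ∈ U, ∀ r : R, br u r ∈ U)
    (hUnc : ∃ u ∈ U, u ∉ ringCenter R)
    {b : R} (h : ∀ u ∈ U, br b u = 0) : b ∈ ringCenter R := by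
  have ha : ∀ u ∈ U, ∀ r : R, br u (br b r) = 0 := by
    intro u hu r
    have key : br u (br b r) = br b (br u r) - br (br b u) r := by
      simp only [br]; noncomm_ring
    rw [key, h _ (hU u hu r), h u hu, br_zero_left, sub_zero]
  have hb : ∀ u' ∈ U, ∀ u ∈ U, ∀ r : R, br u' u * br b r = 0 := by
    intro u' hu' u hu r
    have key : br u' u * br b r = br u' (br b (u * r)) - (br b u) * (br u' r)
        - (br u' (br b u)) * r - u * (br u' (br b r)) := by
      simp only [br]; noncomm_ring
    rw [key, ha u' hu' (u * r), h u hu, ha u' hu' r, br_zero_right, zero_mul, zero_mul,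
      mul_zero, sub_zero, sub_zero, sub_zero]
  have hc : ∀ u' ∈ U, ∀ u ∈ U, ∀ t r : R, br u' u * t * br b r = 0 := by
    intro u' hu' u hu t r
    have key : br u' u * t * br b r = br u' u * br b (t * r) - (br u' u * br b t) * r := by
      simp only [br]; noncomm_ring
    rw [key, hb u' hu' u hu (t * r), hb u' hu' u hu t, zero_mul, sub_zero]
  apply mem_center_of_br
  intro r
  by_cases hbr : br b r = 0
  · exact hbr
  · exfalso
    have hcomm : ∀ u' ∈ U, ∀ u ∈ U, br u' u = 0 := by
      intro u' hu' u hu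
      exact prime_pick hp hbr (hc u' hu' u hu · r)
    obtain ⟨u₀, hu₀, hu₀nc⟩ := hUnc
    exact hu₀nc (L2 hp htf fun s => hcomm u₀ hu₀ _ (hU u₀ hu₀ s))

/-- L1': an element whose brackets with a noncentral Lie ideal are central is central. -/
lemma L1' (hp : IsPrimeRing R) (htf : TwoTorsionFree R) (U : AddSubgroup R)
    (hU : ∀ u ∈ U, ∀ r : R, br u r ∈ U)
    (hUnc : ∃ u ∈ U, u ∉ ringCenter R)
    {b : R} (h : ∀ u ∈ U, br b u ∈ ringCenter R) : b ∈ ringCenter R := by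
  by_cases h0 : ∀ u ∈ U, br b u = 0
  · exact L1 hp htf U hU hUnc h0
  · exfalso
    push_neg at h0
    obtain ⟨u₀, hu₀, hc0⟩ := h0
    set c := br b u₀ with hc
    have hcZ : c ∈ ringCenter R := h u₀ hu₀
    have key : ∀ r : R, br (br u₀ r) u₀ * c = 0 := by
      intro r
      have hmem : br u₀ (r * u₀) ∈ U := hU u₀ hu₀ (r * u₀)
      have hw : br b (br u₀ (r * u₀)) ∈ ringCenter R := h _ hmem
      have hz : br b (br u₀ r) ∈ ringCenter R := h _ (hU u₀ hu₀ r)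
      -- br b ([u₀,r]*u₀) = [u₀,r]*c + z*u₀ with z := br b [u₀,r]
      have e1 : br b (br u₀ (r * u₀)) =
          br u₀ r * c + br b (br u₀ r) * u₀ := by
        simp only [hc, br]; noncomm_ring
      -- bracketing the central element hw with u₀:
      have e2 : br (br u₀ r * c + br b (br u₀ r) * u₀) u₀ = 0 := by
        rw [← e1]; exact br_eq_zero_of_center hw u₀
      -- expand e2 using centrality of c and z
      have e3 : br (br u₀ r * c) u₀ = br (br u₀ r) u₀ * c := by
        have hcu : u₀ * c = c * u₀ := hcZ u₀
        have hcr : ∀ t : R, t * c = c * t := fun t => hcZ t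
        simp only [br]
        calc br u₀ r * c * u₀ - u₀ * (br u₀ r * c)
            = br u₀ r * (c * u₀) - u₀ * (br u₀ r * c) := by noncomm_ring
          _ = br u₀ r * (u₀ * c) - u₀ * (br u₀ r * c) := by rw [hcu]
          _ = (br u₀ r * u₀ - u₀ * br u₀ r) * c := by noncomm_ring
      have e4 : br (br b (br u₀ r) * u₀) u₀ = 0 := by
        have hzr : ∀ t : R, t * br b (br u₀ r) = br b (br u₀ r) * t := fun t => hz t
        simp only [br]
        calc br b (br u₀ r) * u₀ * u₀ - u₀ * (br b (br u₀ r) * u₀)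
            = br b (br u₀ r) * (u₀ * u₀) - (u₀ * br b (br u₀ r)) * u₀ := by noncomm_ring
          _ = br b (br u₀ r) * (u₀ * u₀) - (br b (br u₀ r) * u₀) * u₀ := by rw [hzr u₀]
          _ = 0 := by noncomm_ring
      rw [br_add_left, e3, e4, add_zero] at e2
      exact e2
    have hu₀c : ∀ r : R, br u₀ (br u₀ r) = 0 := by
      intro r
      have := central_cancel' hp hcZ hc0 (key r)
      have e : br u₀ (br u₀ r) = -br (br u₀ r) u₀ := by simp only [br]; noncomm_ring
      rw [e, this, neg_zero]
    have hcen : u₀ ∈ ringCenter R := L2 hp htf hu₀c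
    apply hc0
    rw [hc]
    simp only [br, sub_eq_zero]
    exact hcen b


/-- bracketing on the left as an additive homomorphism -/
def brHom (r : R) : R →+ R := AddMonoidHom.mk' (fun x => br x r) (fun a b => br_add_left a b r)

lemma brHom_apply (r x : R) : brHom r x = br x r := rfl

/-- if all brackets of a nonzero ideal are central, R is commutative -/
lemma comm_of_ideal_br_central (hp : IsPrimeRing R) (htf : TwoTorsionFree R)
    (N : AddSubgroup R)
    (hNid : ∀ r : R, ∀ n ∈ N, r * n ∈ N ∧ n * r ∈ N)
    {n₀ : R} (hn₀ : n₀ ∈ N) (hn₀0 : n₀ ≠ 0)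
    (h : ∀ n ∈ N, ∀ r : R, br n r ∈ ringCenter R) : ∀ r s : R, br r s = 0 := by
  by_contra hcon
  push_neg at hcon
  obtain ⟨r₀, s₀, hr₀s₀⟩ := hcon
  have hr₀nc : r₀ ∉ ringCenter R := fun hZ => hr₀s₀ (br_eq_zero_of_center hZ s₀)
  have hNZ : ∀ n ∈ N, n ∈ ringCenter R := by
    intro n hn
    exact L1' hp htf ⊤ (fun u _ r => trivial) ⟨r₀, trivial, hr₀nc⟩ (fun u _ => h n hn u)
  have key : ∀ n ∈ N, ∀ r s : R, br r s * n = 0 := by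
    intro n hn r s
    have hrn : r * n ∈ N := (hNid r n hn).1
    have e : br (r * n) s = br r s * n := by
      have hns : s * n = n * s := (hNZ n hn) s
      simp only [br]
      calc r * n * s - s * (r * n) = r * (n * s) - s * r * n := by noncomm_ring
        _ = r * (s * n) - s * r * n := by rw [hns]
        _ = (r * s - s * r) * n := by noncomm_ring
    rw [← e]
    exact br_eq_zero_of_center (hNZ _ hrn) s
  refine hr₀s₀ (prime_pick hp hn₀0 fun t => ?_)
  have : t * n₀ ∈ N := (hNid t n₀ hn₀).1
  calc br r₀ s₀ * t * n₀ = br r₀ s₀ * (t * n₀) := by noncomm_ring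
    _ = 0 := key _ this r₀ s₀

/-- Herstein's theorem: a noncentral Lie ideal contains the brackets of a
nonzero ideal, and those brackets are not all central. -/
lemma herstein (hp : IsPrimeRing R) (htf : TwoTorsionFree R) (U : AddSubgroup R)
    (hU : ∀ u ∈ U, ∀ r : R, br u r ∈ U)
    (hUnc : ∃ u ∈ U, u ∉ ringCenter R) :
    ∃ N : AddSubgroup R, (∀ r : R, ∀ n ∈ N, r * n ∈ N ∧ n * r ∈ N) ∧
      (∀ n ∈ N, ∀ r : R, br n r ∈ U) ∧ (∃ n ∈ N, ∃ r : R, br n r ∉ ringCenter R) := by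
  -- find u₁ u₂ ∈ U with w := br u₁ u₂ ≠ 0
  have hw : ∃ u₁ ∈ U, ∃ u₂ ∈ U, br u₁ u₂ ≠ 0 := by
    by_contra hcon
    push_neg at hcon
    obtain ⟨u₀, hu₀, hu₀nc⟩ := hUnc
    exact hu₀nc (L2 hp htf fun r => hcon u₀ hu₀ _ (hU u₀ hu₀ r))
  obtain ⟨u₁, hu₁, u₂, hu₂, hwne⟩ := hw
  set w := br u₁ u₂ with hwdef
  -- the "T(U)" predicate
  set P : R → Prop := fun x => ∀ r : R, br x r ∈ U with hP
  have hPU : ∀ u ∈ U, P u := fun u hu r => hU u hu r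
  have hPmul : ∀ x y : R, P x → P y → P (x * y) := by
    intro x y hx hy r
    have e : br (x * y) r = br x (y * r) + br y (r * x) := by simp only [br]; noncomm_ring
    rw [e]; exact add_mem (hx _) (hy _)
  have hPsub : ∀ x y : R, P x → P y → P (x - y) := by
    intro x y hx hy r
    have e : br (x - y) r = br x r - br y r := by simp only [br]; noncomm_ring
    rw [e]; exact sub_mem (hx _) (hy _)
  have hPw : P w := hPU _ (hU u₁ hu₁ u₂)
  have hPws : ∀ s : R, P (w * s) := by
    intro s
    have e : w * s = br u₁ (u₂ * s) - u₂ * br u₁ s := by simp only [hwdef, br]; noncomm_ring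
    rw [e]
    exact hPsub _ _ (hPU _ (hU u₁ hu₁ (u₂ * s))) (hPmul _ _ (hPU _ hu₂) (hPU _ (hU u₁ hu₁ s)))
  have hPsw : ∀ s : R, P (s * w) := by
    intro s
    have e : s * w = br u₁ (s * u₂) - br u₁ s * u₂ := by simp only [hwdef, br]; noncomm_ring
    rw [e]
    exact hPsub _ _ (hPU _ (hU u₁ hu₁ (s * u₂))) (hPmul _ _ (hPU _ (hU u₁ hu₁ s)) (hPU _ hu₂))
  have hPswt : ∀ s t : R, P (s * w * t) := by
    intro s t x
    have e : br (s * w * t) x = br (w * t) (x * s) - br (w * (t * x)) s := by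
      simp only [br]; noncomm_ring
    rw [e]
    exact sub_mem (hPws t (x * s)) (hPws (t * x) s)
  refine ⟨genId w, genId_ideal w, ?_, ?_⟩
  · intro n hn r
    refine (show genId w ≤ AddSubgroup.comap (brHom r) U from ?_) hn
    rw [genId, closure_le]
    rintro z ⟨s, t, rfl⟩
    simp only [Set.mem_preimage, SetLike.mem_coe, AddSubgroup.mem_comap, brHom_apply]
    exact hPswt s t r
  · by_contra hcon
    push_neg at hcon
    have hcomm := comm_of_ideal_br_central hp htf (genId w) (genId_ideal w)
      (self_mem_genId w) hwne hcon
    obtain ⟨u₀, hu₀, hu₀nc⟩ := hUnc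
    exact hu₀nc (mem_center_of_br fun r => hcomm u₀ r)


lemma ann_ideal_right (hp : IsPrimeRing R) (N : AddSubgroup R)
    (hNid : ∀ r : R, ∀ n ∈ N, r * n ∈ N ∧ n * r ∈ N)
    {n₀ : R} (hn₀ : n₀ ∈ N) (hn₀0 : n₀ ≠ 0)
    {y : R} (h : ∀ n ∈ N, n * y = 0) : y = 0 := by
  refine prime_pick' hp hn₀0 fun t => ?_
  calc n₀ * t * y = (n₀ * t) * y := by noncomm_ring
    _ = 0 := h _ ((hNid t n₀ hn₀).2)

lemma extract_pair (hp : IsPrimeRing R) (N : AddSubgroup R)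
    (hNid : ∀ r : R, ∀ n ∈ N, r * n ∈ N ∧ n * r ∈ N)
    {n₀ : R} (hn₀ : n₀ ∈ N) (hn₀0 : n₀ ≠ 0)
    {x y : R} (hy : y ≠ 0) (h : ∀ n ∈ N, x * n * y = 0) : x = 0 := by
  by_contra hx
  have hny : ∀ n ∈ N, n * y = 0 := by
    intro n hn
    refine (prime_mid hp (x := x) (y := n * y) fun t => ?_).resolve_left hx
    calc x * t * (n * y) = x * (t * n) * y := by noncomm_ring
      _ = 0 := h _ ((hNid t n hn).1)
  exact hy (ann_ideal_right hp N hNid hn₀ hn₀0 hny)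


/-- CL0: if `(ad a)²` kills all brackets `[n,r]` of a nonzero ideal `N`,
then `a` is central. -/
lemma CL0 (hp : IsPrimeRing R) (htf : TwoTorsionFree R) (N : AddSubgroup R)
    (hNid : ∀ r : R, ∀ n ∈ N, r * n ∈ N ∧ n * r ∈ N)
    {n₀ : R} (hn₀ : n₀ ∈ N) (hn₀0 : n₀ ≠ 0)
    {a : R} (H : ∀ n ∈ N, ∀ r : R, br a (br a (br n r)) = 0) :
    a ∈ ringCenter R := by
  -- d³(N) = 0
  have d3N : ∀ n ∈ N, br a (br a (br a n)) = 0 := by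
    intro n hn
    have h1 := H n hn a
    have e : br a (br a (br n a)) = -br a (br a (br a n)) := by simp only [br]; noncomm_ring
    rw [e, neg_eq_zero] at h1
    exact h1
  -- H4 : dr·d²n + 2 d²r·dn + d³r·n = 0
  have H4 : ∀ n ∈ N, ∀ r : R,
      br a r * br a (br a n) + (br a (br a r) * br a n + br a (br a r) * br a n)
        + br a (br a (br a r)) * n = 0 := by
    intro n hn r
    have h1 := H (a * n) ((hNid a n hn).1) r
    have h2 := H n hn r
    have e : br a r * br a (br a n) + (br a (br a r) * br a n + br a (br a r) * br a n)
          + br a (br a (br a r)) * n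
        = br a (br a (br (a * n) r)) - a * br a (br a (br n r)) := by
      simp only [br]; noncomm_ring
    rw [e, h1, h2, mul_zero, sub_zero]
  -- H3 : d²n·dr + 2 dn·d²r + n·d³r = 0
  have H3 : ∀ n ∈ N, ∀ r : R,
      br a (br a n) * br a r + (br a n * br a (br a r) + br a n * br a (br a r))
        + n * br a (br a (br a r)) = 0 := by
    intro n hn r
    have h1 := H (n * a) ((hNid a n hn).2) r
    have h2 := H n hn r
    have e : br a (br a n) * br a r + (br a n * br a (br a r) + br a n * br a (br a r))
          + n * br a (br a (br a r))
        = br a (br a (br (n * a) r)) - br a (br a (br n r)) * a := by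
      simp only [br]; noncomm_ring
    rw [e, h1, h2, zero_mul, sub_zero]
  -- H6 : 2 d²n·d²s + dn·d³s = 0
  have H6 : ∀ n ∈ N, ∀ s : R,
      (br a (br a n) * br a (br a s) + br a (br a n) * br a (br a s))
        + br a n * br a (br a (br a s)) = 0 := by
    intro n hn s
    have h1 := H3 n hn (a * s)
    have h2 := H3 n hn s
    have h3 := d3N n hn
    have e : (br a (br a n) * br a (br a s) + br a (br a n) * br a (br a s))
          + br a n * br a (br a (br a s))
        = -(br a (br a n) * br a (a * s) + (br a n * br a (br a (a * s)) + br a n * br a (br a (a * s)))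
              + n * br a (br a (br a (a * s))))
          + a * (br a (br a n) * br a s + (br a n * br a (br a s) + br a n * br a (br a s))
              + n * br a (br a (br a s)))
          - br a (br a (br a n)) * br a s := by
      simp only [br]; noncomm_ring
    rw [e, h1, h2, h3, neg_zero, mul_zero, zero_add, zero_mul, sub_zero]
  -- H7 : d²n·d³t = 0
  have H7 : ∀ n ∈ N, ∀ t : R, br a (br a n) * br a (br a (br a t)) = 0 := by
    intro n hn t
    have h1 := H6 n hn (a * t)
    have h2 := H6 n hn t
    have h3 := d3N n hn
    have e : br a (br a n) * br a (br a (br a t))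
        = -((br a (br a n) * br a (br a (a * t)) + br a (br a n) * br a (br a (a * t)))
              + br a n * br a (br a (br a (a * t))))
          + a * ((br a (br a n) * br a (br a t) + br a (br a n) * br a (br a t))
              + br a n * br a (br a (br a t)))
          - (br a (br a (br a n)) * br a (br a t) + br a (br a (br a n)) * br a (br a t)) := by
      simp only [br]; noncomm_ring
    rw [e, h1, h2, h3]; simp
  -- P6 : dn·d⁴s = 0
  have P6 : ∀ n ∈ N, ∀ s : R, br a n * br a (br a (br a (br a s))) = 0 := by
    intro n hn s
    have h1 : br a ((br a (br a n) * br a (br a s) + br a (br a n) * br a (br a s))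
        + br a n * br a (br a (br a s))) = 0 := by rw [H6 n hn s]; simp [br]
    have h2 := d3N n hn
    have h3 := H7 n hn (a * s)
    have h4 := H7 n hn s
    have e : br a n * br a (br a (br a (br a s)))
        = br a ((br a (br a n) * br a (br a s) + br a (br a n) * br a (br a s))
            + br a n * br a (br a (br a s)))
          - (br a (br a (br a n)) * br a (br a s) + br a (br a (br a n)) * br a (br a s))
          - (br a (br a n) * br a (br a (br a s)) + br a (br a n) * br a (br a (br a s)))
          - br a (br a n) * br a (br a (br a s)) := by
      simp only [br]; noncomm_ring
    rw [e, h1, h2, h4]; simp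
  by_cases hd4 : ∀ s : R, br a (br a (br a (br a (s)))) = 0
  swap
  · push_neg at hd4
    obtain ⟨s₀, hs₀⟩ := hd4
    have hdn : ∀ n ∈ N, br a n = 0 := by
      intro n hn
      refine extract_pair hp N hNid hn₀ hn₀0 hs₀ fun m hm => ?_
      have e : br a n * m * (br a (br a (br a (br a (s₀)))))
          = br a (n * m) * (br a (br a (br a (br a (s₀))))) - n * (br a m * (br a (br a (br a (br a (s₀)))))) := by
        simp only [br]; noncomm_ring
      rw [e, P6 _ ((hNid m n hn).2) s₀, P6 m hm s₀, mul_zero, sub_zero]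
    exact ideal_centralizer hp N hNid hn₀ hn₀0 hdn
  have Q5 : ∀ r s : R, ((br a (br a (br a (r)))) * (br a (s))) + ((br a (br a (br a (r)))) * (br a (s))) + ((br a (br a (r))) * (br a (br a (s)))) + ((br a (br a (r))) * (br a (br a (s)))) + ((br a (br a (r))) * (br a (br a (s)))) + ((br a (r)) * (br a (br a (br a (s))))) + ((br a (r)) * (br a (br a (br a (s))))) = 0 := by
    intro r s
    have e : (((br a (br a (br a (r)))) * (br a (s))) + ((br a (br a (br a (r)))) * (br a (s))) + ((br a (br a (r))) * (br a (br a (s)))) + ((br a (br a (r))) * (br a (br a (s)))) + ((br a (br a (r))) * (br a (br a (s)))) + ((br a (r)) * (br a (br a (br a (s))))) + ((br a (r)) * (br a (br a (br a (s)))))) + (((br a (br a (br a (r)))) * (br a (s))) + ((br a (br a (br a (r)))) * (br a (s))) + ((br a (br a (r))) * (br a (br a (s)))) + ((br a (br a (r))) * (br a (br a (s)))) + ((br a (br a (r))) * (br a (br a (s)))) + ((br a (r)) * (br a (br a (br a (s))))) + ((br a (r)) * (br a (br a (br a (s))))))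
        = br a (br a (br a (br a (r * s)))) - (br a (br a (br a (br a (r))))) * s - r * (br a (br a (br a (br a (s))))) := by
      simp only [br]; noncomm_ring
    rw [hd4 (r * s), hd4 r, hd4 s, zero_mul, mul_zero, sub_zero, sub_zero] at e
    exact tf2 htf e
  have Q6 : ∀ r t : R, ((br a (br a (br a (r)))) * (br a (br a (t)))) + ((br a (br a (br a (r)))) * (br a (br a (t)))) + ((br a (br a (br a (r)))) * (br a (br a (t)))) + ((br a (br a (r))) * (br a (br a (br a (t))))) + ((br a (br a (r))) * (br a (br a (br a (t))))) = 0 := by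
    intro r t
    have e : ((br a (br a (br a (r)))) * (br a (br a (t)))) + ((br a (br a (br a (r)))) * (br a (br a (t)))) + ((br a (br a (br a (r)))) * (br a (br a (t)))) + ((br a (br a (r))) * (br a (br a (br a (t))))) + ((br a (br a (r))) * (br a (br a (br a (t)))))
        = -(((br a (br a (br a (r)))) * (br a (a * t))) + ((br a (br a (br a (r)))) * (br a (a * t))) + ((br a (br a (r))) * (br a (br a (a * t)))) + ((br a (br a (r))) * (br a (br a (a * t)))) + ((br a (br a (r))) * (br a (br a (a * t)))) + ((br a (r)) * (br a (br a (br a (a * t))))) + ((br a (r)) * (br a (br a (br a (a * t)))))) + a * (((br a (br a (br a (r)))) * (br a (t))) + ((br a (br a (br a (r)))) * (br a (t))) + ((br a (br a (r))) * (br a (br a (t)))) + ((br a (br a (r))) * (br a (br a (t)))) + ((br a (br a (r))) * (br a (br a (t)))) + ((br a (r)) * (br a (br a (br a (t))))) + ((br a (r)) * (br a (br a (br a (t))))))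
          - ((br a (br a (br a (br a (r))))) * (br a (t)) + (br a (br a (br a (br a (r))))) * (br a (t))) := by
      simp only [br]; noncomm_ring
    rw [e, Q5 r (a * t), Q5 r t, hd4 r]; simp
  have Q7 : ∀ r t : R, (br a (br a (br a (r)))) * (br a (br a (br a (t)))) = 0 := by
    intro r t
    have e : (br a (br a (br a (r)))) * (br a (br a (br a (t)))) + (br a (br a (br a (r)))) * (br a (br a (br a (t))))
        = -(((br a (br a (br a (r)))) * (br a (br a (a * t)))) + ((br a (br a (br a (r)))) * (br a (br a (a * t)))) + ((br a (br a (br a (r)))) * (br a (br a (a * t)))) + ((br a (br a (r))) * (br a (br a (br a (a * t))))) + ((br a (br a (r))) * (br a (br a (br a (a * t)))))) + a * (((br a (br a (br a (r)))) * (br a (br a (t)))) + ((br a (br a (br a (r)))) * (br a (br a (t)))) + ((br a (br a (br a (r)))) * (br a (br a (t)))) + ((br a (br a (r))) * (br a (br a (br a (t))))) + ((br a (br a (r))) * (br a (br a (br a (t))))))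
          - ((br a (br a (br a (br a (r))))) * (br a (br a (t))) + (br a (br a (br a (br a (r))))) * (br a (br a (t))) + (br a (br a (br a (br a (r))))) * (br a (br a (t)))) := by
      simp only [br]; noncomm_ring
    rw [Q6 r (a * t), Q6 r t, hd4 r] at e
    simp only [neg_zero, mul_zero, zero_mul, zero_add, add_zero, sub_zero] at e
    exact tf2 htf e
  have H6m : ∀ n ∈ N, ∀ s : R, ((br a (br a (s))) * (br a (br a (n)))) + ((br a (br a (s))) * (br a (br a (n)))) + ((br a (br a (br a (s)))) * (br a (n))) = 0 := by
    intro n hn s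
    have e : ((br a (br a (s))) * (br a (br a (n)))) + ((br a (br a (s))) * (br a (br a (n)))) + ((br a (br a (br a (s)))) * (br a (n)))
        = ((br a (s * a)) * (br a (br a (n))) + ((br a (br a (s * a))) * (br a (n)) + (br a (br a (s * a))) * (br a (n))) + (br a (br a (br a (s * a)))) * (n)) - ((br a (s)) * (br a (br a (n))) + ((br a (br a (s))) * (br a (n)) + (br a (br a (s))) * (br a (n))) + (br a (br a (br a (s)))) * (n)) * a - (br a (s)) * (br a (br a (br a (n)))) := by
      simp only [br]; noncomm_ring
    rw [e, H4 n hn (s * a), H4 n hn s, d3N n hn]; simp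
  have H7m : ∀ n ∈ N, ∀ s : R, (br a (br a (br a (s)))) * (br a (br a (n))) = 0 := by
    intro n hn s
    have e : (br a (br a (br a (s)))) * (br a (br a (n)))
        = (((br a (br a (s * a))) * (br a (br a (n)))) + ((br a (br a (s * a))) * (br a (br a (n)))) + ((br a (br a (br a (s * a)))) * (br a (n)))) - (((br a (br a (s))) * (br a (br a (n)))) + ((br a (br a (s))) * (br a (br a (n)))) + ((br a (br a (br a (s)))) * (br a (n)))) * a
          - ((br a (br a (s))) * (br a (br a (br a (n)))) + (br a (br a (s))) * (br a (br a (br a (n))))) := by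
      simp only [br]; noncomm_ring
    rw [e, H6m n hn (s * a), H6m n hn s, d3N n hn]; simp
  have Xstep : ∀ n ∈ N, ∀ r t : R, (br a (br a (br a (r)))) * n * (br a (br a (br a (t)))) = 0 := by
    intro n hn r t
    have E1 : ((br a (br a (br a (r)))) * n * (br a (br a (br a (t)))))
        + ((br a (br a (br a (r)))) * (br a (n)) * (br a (br a (t))) + (br a (br a (br a (r)))) * (br a (n)) * (br a (br a (t))) + (br a (br a (br a (r)))) * (br a (n)) * (br a (br a (t)))) = 0 := by
      have e : ((br a (br a (br a (r)))) * n * (br a (br a (br a (t)))))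
          + ((br a (br a (br a (r)))) * (br a (n)) * (br a (br a (t))) + (br a (br a (br a (r)))) * (br a (n)) * (br a (br a (t))) + (br a (br a (br a (r)))) * (br a (n)) * (br a (br a (t))))
          = (br a (br a (br a (r)))) * (br a (br a (br a (n * t)))) - ((br a (br a (br a (r)))) * (br a (br a (br a (n))))) * t
            - (((br a (br a (br a (r)))) * (br a (br a (n)))) * (br a (t)) + ((br a (br a (br a (r)))) * (br a (br a (n)))) * (br a (t)) + ((br a (br a (br a (r)))) * (br a (br a (n)))) * (br a (t))) := by
        simp only [br]; noncomm_ring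
      rw [e, Q7 r (n * t), Q7 r n, H7m n hn r]; simp
    have E2 : ((br a (br a (r))) * (br a (br a (n))) * (br a (br a (t))) + (br a (br a (r))) * (br a (br a (n))) * (br a (br a (t))))
        + (br a (br a (br a (r)))) * (br a (n)) * (br a (br a (t))) = 0 := by
      have e : ((br a (br a (r))) * (br a (br a (n))) * (br a (br a (t))) + (br a (br a (r))) * (br a (br a (n))) * (br a (br a (t))))
          + (br a (br a (br a (r)))) * (br a (n)) * (br a (br a (t)))
          = (((br a (br a (r))) * (br a (br a (n)))) + ((br a (br a (r))) * (br a (br a (n)))) + ((br a (br a (br a (r)))) * (br a (n)))) * (br a (br a (t))) := by simp only [br]; noncomm_ring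
      rw [e, H6m n hn r, zero_mul]
    have E4 : ((br a (br a (r))) * (br a (br a (n))) * (br a (br a (t))) + (br a (br a (r))) * (br a (br a (n))) * (br a (br a (t))))
        + (br a (br a (r))) * (br a (n)) * (br a (br a (br a (t)))) = 0 := by
      have e : ((br a (br a (r))) * (br a (br a (n))) * (br a (br a (t))) + (br a (br a (r))) * (br a (br a (n))) * (br a (br a (t))))
          + (br a (br a (r))) * (br a (n)) * (br a (br a (br a (t))))
          = (br a (br a (r))) * ((br a (br a (n))) * (br a (br a (t))) + (br a (br a (n))) * (br a (br a (t))) + (br a (n)) * (br a (br a (br a (t))))) := by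
        simp only [br]; noncomm_ring
      rw [e, H6 n hn t, mul_zero]
    have E5 : ((br a (br a (r))) * (br a (n)) * (br a (br a (br a (t)))) + (br a (br a (r))) * (br a (n)) * (br a (br a (br a (t)))))
        + ((br a (br a (br a (r)))) * n * (br a (br a (br a (t))))) = 0 := by
      have e : ((br a (br a (r))) * (br a (n)) * (br a (br a (br a (t)))) + (br a (br a (r))) * (br a (n)) * (br a (br a (br a (t)))))
          + ((br a (br a (br a (r)))) * n * (br a (br a (br a (t)))))
          = ((br a (r)) * (br a (br a (n))) + ((br a (br a (r))) * (br a (n)) + (br a (br a (r))) * (br a (n))) + (br a (br a (br a (r)))) * (n)) * (br a (br a (br a (t)))) - (br a (r)) * ((br a (br a (n))) * (br a (br a (br a (t))))) := by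
        simp only [br]; noncomm_ring
      rw [e, H4 n hn r, H7 n hn t, zero_mul, mul_zero, sub_zero]
    set X := (br a (br a (br a (r)))) * n * (br a (br a (br a (t)))) with hXdef
    set W := (br a (br a (br a (r)))) * (br a (n)) * (br a (br a (t))) with hWdef
    set Y := (br a (br a (r))) * (br a (br a (n))) * (br a (br a (t))) with hYdef
    set U := (br a (br a (r))) * (br a (n)) * (br a (br a (br a (t)))) with hUdef
    have hW : W = -(Y + Y) := eq_neg_of_add_eq_zero_right E2
    have hU : U = -(Y + Y) := eq_neg_of_add_eq_zero_right E4
    have hX1 : X = -(W + W + W) := eq_neg_of_add_eq_zero_left E1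
    have hX2 : X = -(U + U) := eq_neg_of_add_eq_zero_right E5
    have h6 : X = (Y + Y) + (Y + Y) + (Y + Y) := by rw [hX1, hW]; abel
    have h4 : X = (Y + Y) + (Y + Y) := by rw [hX2, hU]; abel
    have hYY : Y + Y = 0 := add_eq_left.mp (h6.symm.trans h4)
    rw [h4, hYY]; simp
  by_cases hd3 : ∀ t : R, br a (br a (br a (t))) = 0
  swap
  · push_neg at hd3
    obtain ⟨t₀, ht₀⟩ := hd3
    exact absurd (extract_pair hp N hNid hn₀ hn₀0 ht₀ (fun n hn => Xstep n hn t₀ t₀)) ht₀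
  have HH : ∀ n ∈ N, ∀ s : R, (br a (br a (n))) * (br a (br a (s))) = 0 := by
    intro n hn s
    have h := H6 n hn s
    rw [hd3 s, mul_zero, add_zero] at h
    exact tf2 htf h
  have HHm : ∀ n ∈ N, ∀ s : R, (br a (br a (s))) * (br a (br a (n))) = 0 := by
    intro n hn s
    have h := H6m n hn s
    rw [hd3 s, zero_mul, add_zero] at h
    exact tf2 htf h
  have hd2N : ∀ n ∈ N, br a (br a n) = 0 := by
    intro n hn
    have A0 : ∀ s : R, ((br a (br a n)) * (br n (s))) + ((br a n) * (br a (br n (s)))) + ((br a n) * (br a (br n (s)))) = 0 := by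
      intro s
      have h1 := H n hn (n * s)
      have h2 := H n hn s
      have e : ((br a (br a n)) * (br n (s))) + ((br a n) * (br a (br n (s)))) + ((br a n) * (br a (br n (s))))
          = br a (br a (br n (n * s))) - n * br a (br a (br n s)) := by
        simp only [br]; noncomm_ring
      rw [e, h1, h2, mul_zero, sub_zero]
    have B0 : ∀ s : R, ((br n (s)) * (br a (br a n))) + ((br a (br n (s))) * (br a n)) + ((br a (br n (s))) * (br a n)) = 0 := by
      intro s
      have h1 := H n hn (s * n)
      have h2 := H n hn s
      have e : ((br n (s)) * (br a (br a n))) + ((br a (br n (s))) * (br a n)) + ((br a (br n (s))) * (br a n))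
          = br a (br a (br n (s * n))) - br a (br a (br n s)) * n := by
        simp only [br]; noncomm_ring
      rw [e, h1, h2, zero_mul, sub_zero]
    have W4 : ∀ s : R, ((br a n) * (s) * (br a (br a n)) + ((br a (br a n)) * (s) * (br a n) + (br a (br a n)) * (s) * (br a n))
        + ((br a n) * (br a (s)) * (br a n) + (br a n) * (br a (s)) * (br a n))) = 0 := by
      intro s
      have h1 := B0 (a * s)
      have h2 := B0 s
      have e : ((br a n) * (s) * (br a (br a n)) + ((br a (br a n)) * (s) * (br a n) + (br a (br a n)) * (s) * (br a n))
          + ((br a n) * (br a (s)) * (br a n) + (br a n) * (br a (s)) * (br a n)))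
          = -(((br n (a * s)) * (br a (br a n))) + ((br a (br n (a * s))) * (br a n)) + ((br a (br n (a * s))) * (br a n))) + a * (((br n (s)) * (br a (br a n))) + ((br a (br n (s))) * (br a n)) + ((br a (br n (s))) * (br a n))) := by
        simp only [br]; noncomm_ring
      rw [e, h1, h2, mul_zero]; simp
    have W5 : ∀ s : R, ((br a (br a n)) * (s) * (br a n) + ((br a n) * (s) * (br a (br a n)) + (br a n) * (s) * (br a (br a n)))
        + ((br a n) * (br a (s)) * (br a n) + (br a n) * (br a (s)) * (br a n))) = 0 := by
      intro s
      have h1 := A0 (s * a)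
      have h2 := A0 s
      have e : ((br a (br a n)) * (s) * (br a n) + ((br a n) * (s) * (br a (br a n)) + (br a n) * (s) * (br a (br a n)))
          + ((br a n) * (br a (s)) * (br a n) + (br a n) * (br a (s)) * (br a n)))
          = -(((br a (br a n)) * (br n (s * a))) + ((br a n) * (br a (br n (s * a)))) + ((br a n) * (br a (br n (s * a))))) + (((br a (br a n)) * (br n (s))) + ((br a n) * (br a (br n (s)))) + ((br a n) * (br a (br n (s))))) * a := by
        simp only [br]; noncomm_ring
      rw [e, h1, h2, zero_mul]; simp
    have W6 : ∀ s : R, ((br a (br a n)) * (s) * (br a n)) - ((br a n) * (s) * (br a (br a n))) = 0 := by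
      intro s
      have e : ((br a (br a n)) * (s) * (br a n)) - ((br a n) * (s) * (br a (br a n)))
          = (((br a n) * (s) * (br a (br a n)) + ((br a (br a n)) * (s) * (br a n) + (br a (br a n)) * (s) * (br a n))
              + ((br a n) * (br a (s)) * (br a n) + (br a n) * (br a (s)) * (br a n))))
            - (((br a (br a n)) * (s) * (br a n) + ((br a n) * (s) * (br a (br a n)) + (br a n) * (s) * (br a (br a n)))
              + ((br a n) * (br a (s)) * (br a n) + (br a n) * (br a (s)) * (br a n)))) := by abel
      rw [W4 s, W5 s, sub_zero] at e
      exact e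
    have W7 : ∀ s : R, (((br a (br a n)) * (s) * (br a n) + (br a (br a n)) * (s) * (br a n) + (br a (br a n)) * (s) * (br a n)) + ((br a n) * (br a (s)) * (br a n) + (br a n) * (br a (s)) * (br a n))) = 0 := by
      intro s
      have e : (((br a (br a n)) * (s) * (br a n) + (br a (br a n)) * (s) * (br a n) + (br a (br a n)) * (s) * (br a n)) + ((br a n) * (br a (s)) * (br a n) + (br a n) * (br a (s)) * (br a n)))
          = (((br a n) * (s) * (br a (br a n)) + ((br a (br a n)) * (s) * (br a n) + (br a (br a n)) * (s) * (br a n))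
              + ((br a n) * (br a (s)) * (br a n) + (br a n) * (br a (s)) * (br a n))))
            + (((br a (br a n)) * (s) * (br a n)) - ((br a n) * (s) * (br a (br a n)))) := by abel
      rw [W4 s, W6 s, add_zero] at e
      exact e
    have W8 : ∀ t : R, (br a (br a n)) * (br a (t)) * (br a n) = 0 := by
      intro t
      have e : (br a (br a n)) * (br a (t)) * (br a n) + (br a (br a n)) * (br a (t)) * (br a n)
          = -((((br a (br a n)) * (a * t) * (br a n) + (br a (br a n)) * (a * t) * (br a n) + (br a (br a n)) * (a * t) * (br a n)) + ((br a n) * (br a (a * t)) * (br a n) + (br a n) * (br a (a * t)) * (br a n)))) + a * ((((br a (br a n)) * (t) * (br a n) + (br a (br a n)) * (t) * (br a n) + (br a (br a n)) * (t) * (br a n)) + ((br a n) * (br a (t)) * (br a n) + (br a n) * (br a (t)) * (br a n))))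
            - (((br a (br a (br a (n)))) * (t) * (br a n)) + ((br a (br a (br a (n)))) * (t) * (br a n)) + ((br a (br a (br a (n)))) * (t) * (br a n))) := by
        simp only [br]; noncomm_ring
      rw [W7 (a * t), W7 t, d3N n hn] at e
      simp only [neg_zero, mul_zero, zero_mul, zero_add, add_zero, sub_zero] at e
      exact tf2 htf e
    have W10 : ∀ t : R, (((br a (br a n)) * (t) * (br a (br a n)) + (br a (br a n)) * (t) * (br a (br a n)) + (br a (br a n)) * (t) * (br a (br a n)))
        + ((br a n) * (br a (t)) * (br a (br a n)) + (br a n) * (br a (t)) * (br a (br a n)))) = 0 := by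
      intro t
      have e : (((br a (br a n)) * (t) * (br a (br a n)) + (br a (br a n)) * (t) * (br a (br a n)) + (br a (br a n)) * (t) * (br a (br a n)))
          + ((br a n) * (br a (t)) * (br a (br a n)) + (br a n) * (br a (t)) * (br a (br a n))))
          = ((((br a (br a n)) * (t * a) * (br a n) + (br a (br a n)) * (t * a) * (br a n) + (br a (br a n)) * (t * a) * (br a n)) + ((br a n) * (br a (t * a)) * (br a n) + (br a n) * (br a (t * a)) * (br a n)))) - ((((br a (br a n)) * (t) * (br a n) + (br a (br a n)) * (t) * (br a n) + (br a (br a n)) * (t) * (br a n)) + ((br a n) * (br a (t)) * (br a n) + (br a n) * (br a (t)) * (br a n)))) * a := by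
        simp only [br]; noncomm_ring
      rw [e, W7 (t * a), W7 t, zero_mul, sub_zero]
    have R6 : ∀ s : R, ((br a (br a n)) * (s) * (br a (br a n)) + ((br a n) * (br a (s)) * (br a (br a n)) + (br a n) * (br a (s)) * (br a (br a n)))) = 0 := by
      intro s
      have e : ((br a (br a n)) * (s) * (br a (br a n)) + ((br a n) * (br a (s)) * (br a (br a n)) + (br a n) * (br a (s)) * (br a (br a n))))
          = (br a (br a (br n s))) * (br a (br a n)) + (br a (br a (s * n))) * (br a (br a n))
            - n * ((br a (br a (s))) * (br a (br a n))) := by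
        simp only [br]; noncomm_ring
      rw [e, H n hn s, HHm n hn (s * n), HHm n hn s, zero_mul, mul_zero, zero_add, sub_zero]
    have fin : ∀ s : R, (br a (br a n)) * (s) * (br a (br a n)) = 0 := by
      intro s
      have e : (br a (br a n)) * (s) * (br a (br a n)) + (br a (br a n)) * (s) * (br a (br a n))
          = (((br a (br a n)) * (s) * (br a (br a n)) + (br a (br a n)) * (s) * (br a (br a n)) + (br a (br a n)) * (s) * (br a (br a n)))
              + ((br a n) * (br a (s)) * (br a (br a n)) + (br a n) * (br a (s)) * (br a (br a n))))
            - ((br a (br a n)) * (s) * (br a (br a n)) + ((br a n) * (br a (s)) * (br a (br a n)) + (br a n) * (br a (s)) * (br a (br a n)))) := by abel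
      rw [W10 s, R6 s, sub_zero] at e
      exact tf2 htf e
    rcases prime_mid hp fin with h | h <;> exact h
  have hdnd2 : ∀ n ∈ N, ∀ r : R, br a n * br a (br a r) = 0 := by
    intro n hn r
    have h := H3 n hn r
    rw [hd2N n hn, hd3 r, zero_mul, mul_zero, add_zero, zero_add] at h
    exact tf2 htf h
  by_cases hd2 : ∀ r : R, br a (br a r) = 0
  · exact L2 hp htf hd2
  · push_neg at hd2
    obtain ⟨s₀, hs₀⟩ := hd2
    have hdn : ∀ n ∈ N, br a n = 0 := by
      intro n hn
      refine extract_pair hp N hNid hn₀ hn₀0 hs₀ fun m hm => ?_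
      have e : br a n * m * br a (br a s₀)
          = br a (n * m) * br a (br a s₀) - n * (br a m * br a (br a s₀)) := by
        simp only [br]; noncomm_ring
      rw [e, hdnd2 _ ((hNid m n hn).2) s₀, hdnd2 m hm s₀, mul_zero, sub_zero]
    exact ideal_centralizer hp N hNid hn₀ hn₀0 hdn

lemma center_zero' : (0 : R) ∈ ringCenter R := fun r => by simp

lemma center_add' {x y : R} (hx : x ∈ ringCenter R) (hy : y ∈ ringCenter R) :
    x + y ∈ ringCenter R := fun r => by
  rw [mul_add, add_mul, hx r, hy r]

lemma center_neg' {x : R} (hx : -x ∈ ringCenter R) : x ∈ ringCenter R := fun r => by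
  have := hx r
  rw [mul_neg, neg_mul, neg_inj] at this
  exact this

/-- CLZ : if `(ad a)²` maps a suitable Lie ideal into the center, `a` is central. -/
lemma CLZ (hp : IsPrimeRing R) (htf : TwoTorsionFree R) (N U₀ : AddSubgroup R)
    (hNid : ∀ r : R, ∀ n ∈ N, r * n ∈ N ∧ n * r ∈ N)
    {n₀ : R} (hn₀ : n₀ ∈ N) (hn₀0 : n₀ ≠ 0)
    (hU₀lie : ∀ u ∈ U₀, ∀ r : R, br u r ∈ U₀)
    (hU₀N : ∀ u ∈ U₀, u ∈ N)
    (hbrU₀ : ∀ n ∈ N, ∀ r : R, br n r ∈ U₀)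
    {a : R} (H : ∀ u ∈ U₀, br a (br a u) ∈ ringCenter R) :
    a ∈ ringCenter R := by
  by_cases ha : a ∈ ringCenter R
  · exact ha
  obtain ⟨t₀, ht₀⟩ := exists_br_ne_zero ha
  have HK : ∀ n ∈ N, ∀ r : R, br a (br a (br n r)) ∈ ringCenter R :=
    fun n hn r => H _ (hbrU₀ n hn r)
  have d3N : ∀ n ∈ N, br a (br a (br a n)) = 0 := by
    intro n hn
    have hz : br a (br a (br a n)) ∈ ringCenter R := by
      have h1 := HK n hn a
      have e2 : br a (br a (br n a)) = -(br a (br a (br a n))) := by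
        simp only [br]; noncomm_ring
      rw [e2] at h1
      exact center_neg' h1
    have hz2 : a * br a (br a (br a n)) ∈ ringCenter R := by
      have h1 := HK (a * n) ((hNid a n hn).1) a
      have e2 : br a (br a (br (a * n) a)) = -(a * br a (br a (br a n))) := by
        simp only [br]; noncomm_ring
      rw [e2] at h1
      exact center_neg' h1
    set z := br a (br a (br a n)) with hzdef
    have key : ∀ t : R, z * br a t = 0 := by
      intro t
      have hza : z * a = a * z := (hz a).symm
      have hzt : z * t = t * z := (hz t).symm
      calc z * br a t = z * a * t - z * t * a := by simp only [br]; noncomm_ring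
        _ = (a * z) * t - (t * z) * a := by rw [hza, hzt]
        _ = (a * z) * t - t * (z * a) := by noncomm_ring
        _ = (a * z) * t - t * (a * z) := by rw [hza]
        _ = 0 := by rw [hz2 t]; exact sub_self _
    refine prime_pick hp (y := br a t₀) ht₀ fun s => ?_
    have hzs : z * s = s * z := (hz s).symm
    calc z * s * br a t₀ = s * (z * br a t₀) := by rw [hzs]; noncomm_ring
      _ = 0 := by rw [key t₀, mul_zero]
  suffices hH0 : ∀ u ∈ U₀, br a (br a u) = 0 by
    exact CL0 hp htf N hNid hn₀ hn₀0 (fun n hn r => hH0 _ (hbrU₀ n hn r))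
  rcases three_cases hp with h3tf | h3
  · -- 3-torsion-free case
    intro u hu
    by_contra hc
    have hcZ : br a (br a u) ∈ ringCenter R := H u hu
    have hmem : br u (u * a) ∈ U₀ := hU₀lie u hu (u * a)
    have hv := H _ hmem
    have hd3u : br a (br a (br a u)) = 0 := by
      have e : br a (br a (br a u)) = -(br (br a (br a u)) a) := by
        simp only [br]; noncomm_ring
      rw [e, br_eq_zero_of_center hcZ a, neg_zero]
    have e : br a (br a (br u (u * a)))
        = -((br a (br a u)) * (br a u) + ((br a u) * (br a (br a u)) + (br a u) * (br a (br a u))))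
          - u * (br a (br a (br a u))) := by
      simp only [br]; noncomm_ring
    rw [hd3u, mul_zero, sub_zero] at e
    rw [e] at hv
    have hv2 := center_neg' hv
    have hpc : (br a u) * (br a (br a u)) = (br a (br a u)) * (br a u) := hcZ (br a u)
    rw [hpc] at hv2
    have key : ∀ t : R, (br a (br a u)) * br (br a u) t = 0 := by
      intro t
      have h0 := br_eq_zero_of_center hv2 t
      have e2 : br ((br a (br a u)) * (br a u)
            + ((br a (br a u)) * (br a u) + (br a (br a u)) * (br a u))) t
          = br ((br a (br a u)) * (br a u)) t
            + br ((br a (br a u)) * (br a u)) t + br ((br a (br a u)) * (br a u)) t := by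
        simp only [br]; noncomm_ring
      rw [e2] at h0
      have e3 : br ((br a (br a u)) * (br a u)) t
          = (br a (br a u)) * br (br a u) t
            + (br (br a (br a u)) t) * (br a u) := by
        simp only [br]; noncomm_ring
      have e4 : br (br a (br a u)) t = 0 := br_eq_zero_of_center hcZ t
      rw [e4, zero_mul, add_zero] at e3
      rw [e3] at h0
      exact h3tf _ h0
    have hpZ : br a u ∈ ringCenter R := by
      apply mem_center_of_br
      intro t
      exact central_cancel hp hcZ hc (key t)
    exact hc (by
      have e5 : br a (br a u) = -(br (br a u) a) := by simp only [br]; noncomm_ring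
      rw [e5, br_eq_zero_of_center hpZ a, neg_zero])
  · -- characteristic 3 case
    have hd3K : ∀ n ∈ N, ∀ r : R, br a (br a (br a (br n r))) = 0 := by
      intro n hn r
      have e := HK n hn r
      have e2 : br a (br a (br a (br n r)))
          = a * (br a (br a (br n r))) - (br a (br a (br n r))) * a := rfl
      rw [e2, e a, sub_self]
    have hd3Z : ∀ r : R, br a (br a (br a r)) ∈ ringCenter R := by
      intro r
      have hcomm : ∀ n ∈ N, br (br a (br a (br a r))) n = 0 := by
        intro n hn
        have e : br n (br a (br a (br a r)))
            = br a (br a (br a (br n r))) - br (br a (br a (br a n))) r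
              - ((br (br a (br a n)) (br a r) + br (br a (br a n)) (br a r) + br (br a (br a n)) (br a r))
                + (br (br a n) (br a (br a r)) + br (br a n) (br a (br a r)) + br (br a n) (br a (br a r)))) := by
          simp only [br]; noncomm_ring
        rw [hd3K n hn r, d3N n hn, br_zero_left,
          h3 (br (br a (br a n)) (br a r)), h3 (br (br a n) (br a (br a r)))] at e
        simp only [zero_sub, sub_zero, zero_add, add_zero, neg_zero] at e
        have e2 : br (br a (br a (br a r))) n = -(br n (br a (br a (br a r)))) := by
          simp only [br]; noncomm_ring
        rw [e2, e, neg_zero]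
      exact ideal_centralizer hp N hNid hn₀ hn₀0 hcomm
    have ha3 : a * a * a ∈ ringCenter R := by
      refine L1' hp htf ⊤ (fun u _ r => trivial) ⟨a, trivial, ha⟩ fun u _ => ?_
      have e : br (a * a * a) u
          = br a (br a (br a u))
            + ((a * a * u * a - a * u * a * a) + (a * a * u * a - a * u * a * a)
                + (a * a * u * a - a * u * a * a)) := by
        simp only [br]; noncomm_ring
      rw [e, h3 (a * a * u * a - a * u * a * a), add_zero]
      exact hd3Z u
    have hd30 : ∀ r : R, br a (br a (br a r)) = 0 := by
      intro r
      have e : br a (br a (br a r))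
          = br (a * a * a) r
            - ((a * a * r * a - a * r * a * a) + (a * a * r * a - a * r * a * a)
                + (a * a * r * a - a * r * a * a)) := by
        simp only [br]; noncomm_ring
      rw [e, br_eq_zero_of_center ha3 r, h3 (a * a * r * a - a * r * a * a), sub_zero]
    have hFc : ∀ n ∈ N, ∀ r : R,
        ((br a (br a (n))) * (br a (r)) + ((br a (n)) * (br a (br a (r))) + (br a (n)) * (br a (br a (r))))) + (br a (br a (br n r))) * a ∈ ringCenter R := by
      intro n hn r
      have hj := HK (n * a) ((hNid a n hn).2) r
      have e : br a (br a (br (n * a) r))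
          = (((br a (br a (n))) * (br a (r)) + ((br a (n)) * (br a (br a (r))) + (br a (n)) * (br a (br a (r))))) + (br a (br a (br n r))) * a) + n * (br a (br a (br a (r)))) := by
        simp only [br]; noncomm_ring
      rw [e, hd30 r, mul_zero, add_zero] at hj
      exact hj
    have hEc : ∀ n ∈ N, ∀ r : R,
        a * (br a (br a (br n r))) + ((br a (r)) * (br a (br a (n))) + ((br a (br a (r))) * (br a (n)) + (br a (br a (r))) * (br a (n)))) ∈ ringCenter R := by
      intro n hn r
      have hj := HK (a * n) ((hNid a n hn).1) r
      have e : br a (br a (br (a * n) r))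
          = (a * (br a (br a (br n r))) + ((br a (r)) * (br a (br a (n))) + ((br a (br a (r))) * (br a (n)) + (br a (br a (r))) * (br a (n))))) + (br a (br a (br a (r)))) * n := by
        simp only [br]; noncomm_ring
      rw [e, hd30 r, zero_mul, add_zero] at hj
      exact hj
    have hZc : ∀ n ∈ N, ∀ r : R,
        a * ((br a (br a (n))) * (br a (r)) + ((br a (n)) * (br a (br a (r))) + (br a (n)) * (br a (br a (r))))) + a * (br a (br a (br n r))) * a + ((br a (r)) * (br a (br a (n))) + ((br a (br a (r))) * (br a (n)) + (br a (br a (r))) * (br a (n)))) * a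
          ∈ ringCenter R := by
      intro n hn r
      have hj := HK (a * (n * a)) ((hNid a _ ((hNid a n hn).2)).1) r
      have e : br a (br a (br (a * (n * a)) r))
          = (a * ((br a (br a (n))) * (br a (r)) + ((br a (n)) * (br a (br a (r))) + (br a (n)) * (br a (br a (r))))) + a * (br a (br a (br n r))) * a + ((br a (r)) * (br a (br a (n))) + ((br a (br a (r))) * (br a (n)) + (br a (br a (r))) * (br a (n)))) * a)
            + (a * (n * (br a (br a (br a (r))))) + (br a (br a (br a (r)))) * n * a) := by
        simp only [br]; noncomm_ring
      rw [e, hd30 r] at hj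
      simp only [mul_zero, zero_mul, add_zero, zero_add] at hj
      exact hj
    have CZ34 : ∀ n ∈ N, ∀ r t : R,
        (br a t) * ((br a (br a (n))) * (br a (r)) + ((br a (n)) * (br a (br a (r))) + (br a (n)) * (br a (br a (r))))) + ((br a (r)) * (br a (br a (n))) + ((br a (br a (r))) * (br a (n)) + (br a (br a (r))) * (br a (n)))) * (br a t) = 0 := by
      intro n hn r t
      have e : (br a t) * ((br a (br a (n))) * (br a (r)) + ((br a (n)) * (br a (br a (r))) + (br a (n)) * (br a (br a (r))))) + ((br a (r)) * (br a (br a (n))) + ((br a (br a (r))) * (br a (n)) + (br a (br a (r))) * (br a (n)))) * (br a t)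
          = br (a * ((br a (br a (n))) * (br a (r)) + ((br a (n)) * (br a (br a (r))) + (br a (n)) * (br a (br a (r))))) + a * (br a (br a (br n r))) * a + ((br a (r)) * (br a (br a (n))) + ((br a (br a (r))) * (br a (n)) + (br a (br a (r))) * (br a (n)))) * a) t
            - a * (br (((br a (br a (n))) * (br a (r)) + ((br a (n)) * (br a (br a (r))) + (br a (n)) * (br a (br a (r))))) + (br a (br a (br n r))) * a) t)
            - (br (a * (br a (br a (br n r))) + ((br a (r)) * (br a (br a (n))) + ((br a (br a (r))) * (br a (n)) + (br a (br a (r))) * (br a (n))))) t) * a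
            + a * (br (br a (br a (br n r))) t) * a := by
        simp only [br]; noncomm_ring
      rw [e, br_eq_zero_of_center (hZc n hn r) t, br_eq_zero_of_center (hFc n hn r) t,
        br_eq_zero_of_center (hEc n hn r) t, br_eq_zero_of_center (HK n hn r) t]
      simp
    have CZ36 : ∀ n ∈ N, ∀ r t : R,
        (br a (br a t)) * ((br a (br a (n))) * (br a (r)) + ((br a (n)) * (br a (br a (r))) + (br a (n)) * (br a (br a (r))))) + (br a (br a (r))) * (br a (br a (n))) * (br a (t)) = 0 := by
      intro n hn r t
      have e : (br a (br a t)) * ((br a (br a (n))) * (br a (r)) + ((br a (n)) * (br a (br a (r))) + (br a (n)) * (br a (br a (r))))) + (br a (br a (r))) * (br a (br a (n))) * (br a (t))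
          = a * ((br a t) * ((br a (br a (n))) * (br a (r)) + ((br a (n)) * (br a (br a (r))) + (br a (n)) * (br a (br a (r))))) + ((br a (r)) * (br a (br a (n))) + ((br a (br a (r))) * (br a (n)) + (br a (br a (r))) * (br a (n)))) * (br a t))
            - ((br a t) * ((br a (br a (a * n))) * (br a (r)) + ((br a (a * n)) * (br a (br a (r))) + (br a (a * n)) * (br a (br a (r))))) + ((br a (r)) * (br a (br a (a * n))) + ((br a (br a (r))) * (br a (a * n)) + (br a (br a (r))) * (br a (a * n)))) * (br a t))
            - (((br a (br a (br a (r)))) * (br a (n)) * (br a (t))) + ((br a (br a (br a (r)))) * (br a (n)) * (br a (t)))) := by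
        simp only [br]; noncomm_ring
      rw [e, CZ34 n hn r t, CZ34 (a * n) ((hNid a n hn).1) r t, hd30 r]
      simp
    have CZ38 : ∀ n ∈ N, ∀ r t : R,
        (br a (br a t)) * ((br a (br a (n))) * (br a (r)) + ((br a (n)) * (br a (br a (r))) + (br a (n)) * (br a (br a (r)))))
          + ((br a t) * (br a (br a (n))) * (br a (br a (r))) + (br a t) * (br a (br a (n))) * (br a (br a (r)))) = 0 := by
      intro n hn r t
      have e : (br a (br a t)) * ((br a (br a (n))) * (br a (r)) + ((br a (n)) * (br a (br a (r))) + (br a (n)) * (br a (br a (r)))))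
            + ((br a t) * (br a (br a (n))) * (br a (br a (r))) + (br a t) * (br a (br a (n))) * (br a (br a (r))))
          = a * ((br a t) * ((br a (br a (n))) * (br a (r)) + ((br a (n)) * (br a (br a (r))) + (br a (n)) * (br a (br a (r))))) + ((br a (r)) * (br a (br a (n))) + ((br a (br a (r))) * (br a (n)) + (br a (br a (r))) * (br a (n)))) * (br a t))
            - ((br a t) * ((br a (br a (n))) * (br a (a * r)) + ((br a (n)) * (br a (br a (a * r))) + (br a (n)) * (br a (br a (a * r))))) + ((br a (a * r)) * (br a (br a (n))) + ((br a (br a (a * r))) * (br a (n)) + (br a (br a (a * r))) * (br a (n)))) * (br a t))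
            - (br a t) * (br a (br a (br a (n)))) * (br a (r)) := by
        simp only [br]; noncomm_ring
      rw [e, CZ34 n hn r t, CZ34 n hn (a * r) t, d3N n hn]
      simp
    intro u hu
    by_contra hc
    have hcZ : br a (br a u) ∈ ringCenter R := H u hu
    have hAC : ∀ r t : R,
        (br a (br a (r))) * (br a t) - ((br a t) * (br a (br a (r))) + (br a t) * (br a (br a (r)))) = 0 := by
      intro r t
      have h36 := CZ36 u (hU₀N u hu) r t
      have h38 := CZ38 u (hU₀N u hu) r t
      have hY : (br a (br a (r))) * (br a (br a (u))) * (br a (t))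
          - ((br a t) * (br a (br a (u))) * (br a (br a (r))) + (br a t) * (br a (br a (u))) * (br a (br a (r)))) = 0 := by
        have e2 : (br a (br a (r))) * (br a (br a (u))) * (br a (t))
              - ((br a t) * (br a (br a (u))) * (br a (br a (r))) + (br a t) * (br a (br a (u))) * (br a (br a (r))))
            = ((br a (br a t)) * ((br a (br a (u))) * (br a (r)) + ((br a (u)) * (br a (br a (r))) + (br a (u)) * (br a (br a (r))))) + (br a (br a (r))) * (br a (br a (u))) * (br a (t)))
              - ((br a (br a t)) * ((br a (br a (u))) * (br a (r)) + ((br a (u)) * (br a (br a (r))) + (br a (u)) * (br a (br a (r)))))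
                + ((br a t) * (br a (br a (u))) * (br a (br a (r))) + (br a t) * (br a (br a (u))) * (br a (br a (r))))) := by
          abel
        rw [h36, h38, sub_zero] at e2
        exact e2
      have hc1 : ∀ w : R, w * (br a (br a u)) = (br a (br a u)) * w := fun w => hcZ w
      have e3 : (br a (br a u)) * ((br a (br a (r))) * (br a t) - ((br a t) * (br a (br a (r))) + (br a t) * (br a (br a (r)))))
          = (br a (br a (r))) * (br a (br a (u))) * (br a (t))
            - ((br a t) * (br a (br a (u))) * (br a (br a (r))) + (br a t) * (br a (br a (u))) * (br a (br a (r)))) := by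
        rw [mul_sub, mul_add]
        rw [show (br a (br a u)) * ((br a (br a (r))) * (br a t)) = ((br a (br a u)) * (br a (br a (r)))) * (br a t) from by noncomm_ring]
        rw [← hc1 ((br a (br a (r))))]
        rw [show (br a (br a u)) * ((br a t) * (br a (br a (r)))) = ((br a (br a u)) * (br a t)) * (br a (br a (r))) from by noncomm_ring]
        rw [← hc1 (br a t)]
      rw [hY] at e3
      exact central_cancel hp hcZ hc e3
    have hfin : ∀ t : R, (br a (br a u)) * (br a t) = 0 := by
      intro t
      have h := hAC u t
      have hct : (br a t) * (br a (br a u)) = (br a (br a u)) * (br a t) := hcZ (br a t)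
      rw [hct] at h
      have e : -((br a (br a u)) * (br a t))
          = (br a (br a u)) * (br a t)
            - ((br a (br a u)) * (br a t) + (br a (br a u)) * (br a t)) := by abel
      rw [h] at e
      exact neg_eq_zero.mp e
    have haZ : a ∈ ringCenter R :=
      mem_center_of_br fun t => central_cancel hp hcZ hc (hfin t)
    exact absurd haZ ha


lemma br_swap (x y : R) : br x y = -br y x := by simp only [br]; noncomm_ring

def interSub (A B : AddSubgroup R) : AddSubgroup R where
  carrier := {x | x ∈ A ∧ x ∈ B}
  zero_mem' := ⟨zero_mem A, zero_mem B⟩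
  add_mem' := fun hx hy => ⟨add_mem hx.1 hy.1, add_mem hx.2 hy.2⟩
  neg_mem' := fun hx => ⟨neg_mem hx.1, neg_mem hx.2⟩

lemma mem_interSub {A B : AddSubgroup R} {x : R} :
    x ∈ interSub A B ↔ x ∈ A ∧ x ∈ B := Iff.rfl

/-- one refinement step -/
def stepSub (W : AddSubgroup R) : AddSubgroup R where
  carrier := {x | x ∈ W ∧ ∀ r : R, br x r ∈ W}
  zero_mem' := ⟨zero_mem W, fun r => by rw [br_zero_left]; exact zero_mem W⟩
  add_mem' := by
    rintro x y ⟨hx, hx2⟩ ⟨hy, hy2⟩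
    exact ⟨add_mem hx hy, fun r => by rw [br_add_left]; exact add_mem (hx2 r) (hy2 r)⟩
  neg_mem' := by
    rintro x ⟨hx, hx2⟩
    exact ⟨neg_mem hx, fun r => by rw [br_neg_left]; exact neg_mem (hx2 r)⟩

lemma mem_stepSub {W : AddSubgroup R} {x : R} :
    x ∈ stepSub W ↔ x ∈ W ∧ ∀ r : R, br x r ∈ W := Iff.rfl

lemma stepSub_st (U₀ W : AddSubgroup R)
    (hWst : ∀ x ∈ W, ∀ u ∈ U₀, br x u ∈ W) :
    ∀ x ∈ stepSub W, ∀ u ∈ U₀, br x u ∈ stepSub W := by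
  rintro x ⟨hxW, hx2⟩ u hu
  refine ⟨hWst x hxW u hu, fun r => ?_⟩
  have e : br (br x u) r = br (br x r) u + br x (br u r) := by simp only [br]; noncomm_ring
  rw [e]
  exact add_mem (hWst _ (hx2 r) u hu) (hx2 _)

/-- one-step lemma: `[v,[v,u]]` climbs one level of the chain -/
lemma onestep (N U₀ W : AddSubgroup R)
    (hNid : ∀ r : R, ∀ n ∈ N, r * n ∈ N ∧ n * r ∈ N)
    (hU₀lie : ∀ u ∈ U₀, ∀ r : R, br u r ∈ U₀)
    (hU₀N : ∀ u ∈ U₀, u ∈ N)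
    (hbrN : ∀ n ∈ N, ∀ r : R, br n r ∈ U₀)
    (hWU₀ : ∀ x ∈ W, x ∈ U₀)
    (hWst : ∀ x ∈ W, ∀ u ∈ U₀, br x u ∈ W)
    {v : R} (hv : v ∈ W) {u : R} (hu : u ∈ U₀) :
    br v (br v u) ∈ W ∧ ∀ r : R, br (br v (br v u)) r ∈ W := by
  have dmemW : ∀ y ∈ U₀, br v y ∈ W := fun y hy => hWst v hv y hy
  have hvU₀ : v ∈ U₀ := hWU₀ v hv
  have d2r : ∀ r : R, br v (br v r) ∈ W := fun r => dmemW _ (hU₀lie v hvU₀ r)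
  have part1 : br v (br v u) ∈ W := dmemW _ (hU₀lie v hvU₀ u)
  refine ⟨part1, fun r => ?_⟩
  have viii : br (br v (br v u)) r + br (br v u) (br v r) ∈ W := by
    have e : br (br v (br v u)) r + br (br v u) (br v r)
        = br v (br v (u * r)) - br v (br (u * v) r) + br v (br u (r * v)) := by
      simp only [br]; noncomm_ring
    rw [e]
    have m1 : br v (br v (u * r)) ∈ W := d2r (u * r)
    have m2 : br v (br (u * v) r) ∈ W :=
      dmemW _ (hbrN (u * v) ((hNid v u (hU₀N u hu)).2) r)
    have m3 : br v (br u (r * v)) ∈ W := dmemW _ (hU₀lie u hu (r * v))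
    exact add_mem (sub_mem m1 m2) m3
  have hdd : br (br v u) (br v r) ∈ W :=
    hWst _ (dmemW u hu) _ (hU₀lie v hvU₀ r)
  have e2 : br (br v (br v u)) r
      = (br (br v (br v u)) r + br (br v u) (br v r)) - br (br v u) (br v r) := by abel
  rw [e2]
  exact sub_mem viii hdd

end BHK

/-- Let `R` be a prime, 2-torsion-free ring with center `Z`, let `U` be a Lie
ideal of `R`, and let `V` be an additive subgroup of `R` such that
`[V, U] ⊆ V`. Then either `U ⊆ Z`, or `V ⊆ Z`, or there exists a (two-sided)
ideal `M` of `R` with `0 ≠ [M, R] ⊆ V`. -/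
theorem addSubgroup_lieIdeal_central_or_ideal_brackets_of_prime
    {R : Type*} [Ring R]
    (hprime : IsPrimeRing R) (htf : TwoTorsionFree R)
    (U : AddSubgroup R) (hU : ∀ u ∈ U, ∀ r : R, u * r - r * u ∈ U)
    (V : AddSubgroup R) (hVU : ∀ v ∈ V, ∀ u ∈ U, v * u - u * v ∈ V) :
    (U : Set R) ⊆ ringCenter R ∨ (V : Set R) ⊆ ringCenter R ∨
      ∃ M : AddSubgroup R, (∀ r : R, ∀ x ∈ M, r * x ∈ M ∧ x * r ∈ M) ∧
        (∃ m ∈ M, ∃ r : R, m * r - r * m ≠ 0) ∧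
        (∀ m ∈ M, ∀ r : R, m * r - r * m ∈ (V : Set R)) := by
  classical
  by_cases hUZ : (U : Set R) ⊆ ringCenter R
  · exact Or.inl hUZ
  by_cases hVZ : (V : Set R) ⊆ ringCenter R
  · exact Or.inr (Or.inl hVZ)
  refine Or.inr (Or.inr ?_)
  have hU' : ∀ u ∈ U, ∀ r : R, BHK.br u r ∈ U := by
    intro u hu r; rw [BHK.br_def]; exact hU u hu r
  have hVU' : ∀ v ∈ V, ∀ u ∈ U, BHK.br v u ∈ V := by
    intro v hv u hu; rw [BHK.br_def]; exact hVU v hv u hu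
  have hUnc : ∃ u ∈ U, u ∉ ringCenter R := by
    by_contra hcon; push_neg at hcon; exact hUZ fun u hu => hcon u hu
  obtain ⟨N, hNid, hNU, nw, hnw, rw', hnrZ⟩ := BHK.herstein hprime htf U hU' hUnc
  -- U₀ := U ⊓ N
  set U₀ : AddSubgroup R := BHK.interSub U N with hU₀def
  have hU₀lie : ∀ u ∈ U₀, ∀ r : R, BHK.br u r ∈ U₀ := by
    rintro u ⟨hu1, hu2⟩ r
    refine ⟨hU' u hu1 r, ?_⟩
    rw [BHK.br_def]
    exact sub_mem (hNid r u hu2).2 (hNid r u hu2).1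
  have hbrN : ∀ n ∈ N, ∀ r : R, BHK.br n r ∈ U₀ := by
    intro n hn r
    refine ⟨hNU n hn r, ?_⟩
    rw [BHK.br_def]
    exact sub_mem (hNid r n hn).2 (hNid r n hn).1
  have hU₀N : ∀ u ∈ U₀, u ∈ N := fun u hu => hu.2
  have hU₀nc : ∃ u ∈ U₀, u ∉ ringCenter R := ⟨BHK.br nw rw', hbrN nw hnw rw', hnrZ⟩
  set m₀ : R := BHK.br nw rw' with hm₀def
  have hm₀N : m₀ ∈ N := (hbrN nw hnw rw').2
  have hm₀0 : m₀ ≠ 0 := fun h0 => hnrZ (by rw [h0]; exact BHK.center_zero')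
  -- W₀ := V ⊓ U₀
  set W₀ : AddSubgroup R := BHK.interSub V U₀ with hW₀def
  have hW₀st : ∀ x ∈ W₀, ∀ u ∈ U₀, BHK.br x u ∈ W₀ := by
    rintro x ⟨hx1, hx2⟩ u hu
    exact ⟨hVU' x hx1 u hu.1, hU₀lie x hx2 u⟩
  have hW₀U₀ : ∀ x ∈ W₀, x ∈ U₀ := fun x hx => hx.2
  have hW₀V : ∀ x ∈ W₀, x ∈ V := fun x hx => hx.1
  have hW₀nc : ∃ x ∈ W₀, x ∉ ringCenter R := by
    by_contra hcon
    push_neg at hcon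
    refine hVZ fun v hv => ?_
    refine BHK.L1' hprime htf U₀ hU₀lie hU₀nc fun u hu => ?_
    refine hcon _ ⟨hVU' v hv u hu.1, ?_⟩
    rw [BHK.br_swap]
    exact neg_mem (hU₀lie u hu v)
  obtain ⟨v₀, hv₀W, hv₀nc⟩ := hW₀nc
  set W₁ : AddSubgroup R := BHK.stepSub W₀ with hW₁def
  set W₂ : AddSubgroup R := BHK.stepSub W₁ with hW₂def
  have hW₁st : ∀ x ∈ W₁, ∀ u ∈ U₀, BHK.br x u ∈ W₁ := BHK.stepSub_st U₀ W₀ hW₀st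
  have hW₁U₀ : ∀ x ∈ W₁, x ∈ U₀ := fun x hx => hW₀U₀ _ hx.1
  have hW₁W₀ : ∀ x ∈ W₁, x ∈ W₀ := fun x hx => hx.1
  have step1 : ∃ x ∈ W₁, x ∉ ringCenter R := by
    by_contra hcon
    push_neg at hcon
    refine hv₀nc (BHK.CLZ hprime htf N U₀ hNid hm₀N hm₀0 hU₀lie hU₀N hbrN fun u hu => ?_)
    have hq := BHK.onestep N U₀ W₀ hNid hU₀lie hU₀N hbrN hW₀U₀ hW₀st hv₀W hu
    exact hcon _ ⟨hq.1, hq.2⟩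
  obtain ⟨v₁, hv₁W, hv₁nc⟩ := step1
  have step2 : ∃ x ∈ W₂, x ∉ ringCenter R := by
    by_contra hcon
    push_neg at hcon
    refine hv₁nc (BHK.CLZ hprime htf N U₀ hNid hm₀N hm₀0 hU₀lie hU₀N hbrN fun u hu => ?_)
    have hq := BHK.onestep N U₀ W₁ hNid hU₀lie hU₀N hbrN hW₁U₀ hW₁st hv₁W hu
    exact hcon _ ⟨hq.1, hq.2⟩
  obtain ⟨v₂, hv₂W, hv₂nc⟩ := step2
  by_cases hTT : ∀ x y : R, (∀ r : R, BHK.br x r ∈ W₁) → (∀ r : R, BHK.br y r ∈ W₁) →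
      BHK.br x y = 0
  · exfalso
    apply hv₂nc
    refine BHK.CL0 hprime htf N hNid hm₀N hm₀0 fun n hn r => ?_
    have key : ∀ u ∈ U₀, BHK.br v₂ (BHK.br v₂ u) = 0 := by
      intro u hu
      have hv₂T₁ : ∀ r : R, BHK.br v₂ r ∈ W₁ := fun r => hv₂W.2 r
      have hyT₁ : ∀ r : R, BHK.br (BHK.br v₂ u) r ∈ W₁ := by
        intro r
        have e : BHK.br (BHK.br v₂ u) r
            = BHK.br (BHK.br v₂ r) u + BHK.br v₂ (BHK.br u r) := by
          simp only [BHK.br]; noncomm_ring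
        rw [e]
        exact add_mem (hW₁st _ (hv₂W.2 r) u hu) (hv₂T₁ _)
      exact hTT v₂ (BHK.br v₂ u) hv₂T₁ hyT₁
    exact key _ (hbrN n hn r)
  · push_neg at hTT
    obtain ⟨t, t', hT, hT', hw⟩ := hTT
    set w : R := BHK.br t t' with hwdef
    have tT₀ : ∀ r : R, BHK.br t r ∈ W₀ := fun r => (hT r).1
    have t'T₀ : ∀ r : R, BHK.br t' r ∈ W₀ := fun r => (hT' r).1
    have Tmul : ∀ x y : R, (∀ r : R, BHK.br x r ∈ W₀) → (∀ r : R, BHK.br y r ∈ W₀) →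
        ∀ r : R, BHK.br (x * y) r ∈ W₀ := by
      intro x y hx hy r
      have e : BHK.br (x * y) r = BHK.br x (y * r) + BHK.br y (r * x) := by
        simp only [BHK.br]; noncomm_ring
      rw [e]; exact add_mem (hx _) (hy _)
    have hwsT₀ : ∀ s r : R, BHK.br (w * s) r ∈ W₀ := by
      intro s r
      have e : BHK.br (w * s) r
          = BHK.br (BHK.br t (t' * s)) r - BHK.br (t' * BHK.br t s) r := by
        rw [hwdef]; simp only [BHK.br]; noncomm_ring
      rw [e]
      refine sub_mem ((hT (t' * s)).2 r) ?_
      exact Tmul t' (BHK.br t s) t'T₀ (fun r' => (hT s).2 r') r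
    have hswrW₀ : ∀ s r x : R, BHK.br (s * w * r) x ∈ W₀ := by
      intro s r x
      have e : BHK.br (s * w * r) x = BHK.br (w * r) (x * s) - BHK.br (w * (r * x)) s := by
        simp only [BHK.br]; noncomm_ring
      rw [e]
      exact sub_mem (hwsT₀ r (x * s)) (hwsT₀ (r * x) s)
    refine ⟨BHK.genId w, BHK.genId_ideal w, ?_, ?_⟩
    · by_contra hcon
      push_neg at hcon
      have hcomm := BHK.comm_of_ideal_br_central hprime htf (BHK.genId w)
        (BHK.genId_ideal w) (BHK.self_mem_genId w) hw
        (fun m hm r => by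
          rw [BHK.br_def, hcon m hm r]; exact BHK.center_zero')
      refine hVZ fun v hv => ?_
      exact BHK.mem_center_of_br fun r => hcomm v r
    · intro m hm r
      have hmem : BHK.br m r ∈ W₀ := by
        refine (show BHK.genId w ≤ AddSubgroup.comap (BHK.brHom r) W₀ from ?_) hm
        rw [BHK.genId, AddSubgroup.closure_le]
        rintro z ⟨s, tt, rfl⟩
        simp only [Set.mem_preimage, SetLike.mem_coe, AddSubgroup.mem_comap, BHK.brHom_apply]
        exact hswrW₀ s tt r
      have : BHK.br m r ∈ V := hW₀V _ hmem
      rw [BHK.br_def] at this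
      simpa using this
end

section
/- Let A be a prime associative superalgebra over a commutative unital ring Φ with 1/2 ∈ Φ, let L be a Lie ideal of A that is dense in A, and let v be a homogeneous element of A such that vLv = 0. Then v = 0. -/
/-! Basic notions for associative superalgebras (ℤ/2-graded algebras). -/

variable {Φ A : Type*} [CommRing Φ] [Ring A] [Algebra Φ A]
variable (𝒜 : ZMod 2 → Submodule Φ A) [GradedAlgebra 𝒜]

/-- The superbracket of elements of degrees `i` and `j`:
`[a,b] = a*b - (-1)^(|a||b|) b*a`. -/
def sbrak (i j : ZMod 2) (a b : A) : A :=
  a * b - ((-1 : ℤ) ^ (i.val * j.val)) • (b * a)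

/-- The bilinear extension of the superbracket to all of `A`, via the
homogeneous components. -/
def superComm (x y : A) : A :=
  ∑ i : ZMod 2, ∑ j : ZMod 2,
    sbrak i j (DirectSum.decompose 𝒜 x i : A) (DirectSum.decompose 𝒜 y j : A)

/-- A graded submodule: one containing all homogeneous components of its
elements. -/
def IsGradedSub (M : Submodule Φ A) : Prop :=
  ∀ (i : ZMod 2), ∀ x ∈ M, (DirectSum.decompose 𝒜 x i : A) ∈ M

/-- A graded two-sided ideal of the superalgebra `A`. -/
def IsGradedIdeal (I : Submodule Φ A) : Prop :=
  IsGradedSub 𝒜 I ∧ ∀ (a : A), ∀ x ∈ I, a * x ∈ I ∧ x * a ∈ I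

/-- `A` is a prime superalgebra: for graded ideals `I, J`, `IJ = 0` implies
`I = 0` or `J = 0`. -/
def SuperPrime : Prop :=
  ∀ I J : Submodule Φ A, IsGradedIdeal 𝒜 I → IsGradedIdeal 𝒜 J →
    (∀ x ∈ I, ∀ y ∈ J, x * y = 0) → I = ⊥ ∨ J = ⊥

/-- `A` is a semiprime superalgebra: for graded ideals `I`, `I² = 0` implies
`I = 0`. -/
def SuperSemiprime : Prop :=
  ∀ I : Submodule Φ A, IsGradedIdeal 𝒜 I →
    (∀ x ∈ I, ∀ y ∈ I, x * y = 0) → I = ⊥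

/-- `A` is a nontrivial superalgebra: its odd part is nonzero. -/
def SuperNontrivial : Prop := 𝒜 1 ≠ ⊥

/-- `Z`: the even part of the center of `A`. -/
def evenCenter : Set A := {z | z ∈ 𝒜 0 ∧ ∀ a : A, a * z = z * a}

/-- A Lie ideal of `A`: a graded submodule `L` with `[L, A] ⊆ L`
(superbracket). -/
def IsSuperLieIdeal (L : Submodule Φ A) : Prop :=
  IsGradedSub 𝒜 L ∧ ∀ l ∈ L, ∀ a : A, superComm 𝒜 l a ∈ L

/-- A graded subalgebra of `A`: a graded submodule closed under
multiplication. -/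
def IsGradedSubalg (W : Submodule Φ A) : Prop :=
  IsGradedSub 𝒜 W ∧ ∀ x ∈ W, ∀ y ∈ W, x * y ∈ W

/-- A submodule `M` is dense in `A` if the (non-unital) subalgebra generated
by `M` contains a nonzero graded ideal of `A`. -/
def SuperDense (M : Submodule Φ A) : Prop :=
  ∃ I : Submodule Φ A, IsGradedIdeal 𝒜 I ∧ I ≠ ⊥ ∧
    ∀ x ∈ I, x ∈ NonUnitalAlgebra.adjoin Φ (M : Set A)

/-- Witness that `A` is a central order in the Clifford superalgebra of a
nondegenerate quadratic space of dimension `n` over the field `Z⁻¹Z`: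
an embedding `f` of `A` into such a Clifford superalgebra, preserving the
grading, inverting the nonzero elements of `Z`, and such that every element of
the Clifford superalgebra (resp. of its base field) is a fraction of elements
of `A` (resp. of `Z`) over `Z`. -/
structure CentralOrderInCliffWitness (n : ℕ) : Type _ where
  K : Type
  [fieldK : Field K]
  V : Type
  [acgV : AddCommGroup V]
  [modV : Module K V]
  Q : QuadraticForm K V
  dim : Module.finrank K V = n
  nondeg : LinearMap.BilinForm.Nondegenerate (QuadraticMap.polarBilin Q)
  f : A →+* CliffordAlgebra Q
  inj : Function.Injective f
  graded : ∀ i : ZMod 2, ∀ x ∈ 𝒜 i, f x ∈ CliffordAlgebra.evenOdd Q i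
  unitZ : ∀ z ∈ evenCenter 𝒜, z ≠ 0 → IsUnit (f z)
  centralZ : ∀ z ∈ evenCenter 𝒜, ∀ c : CliffordAlgebra Q, c * f z = f z * c
  fracSurj : ∀ (i : ZMod 2), ∀ c ∈ CliffordAlgebra.evenOdd Q i,
    ∃ z ∈ evenCenter 𝒜, z ≠ 0 ∧ ∃ a ∈ 𝒜 i, f z * c = f a
  baseField : ∀ k : K, ∃ z ∈ evenCenter 𝒜, z ≠ 0 ∧ ∃ w ∈ evenCenter 𝒜,
    algebraMap K (CliffordAlgebra Q) k * f z = f w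

/-- `A` is a central order in `C(n)`. -/
def IsCentralOrderInCliff (n : ℕ) : Prop :=
  (∃ z ∈ evenCenter 𝒜, z ≠ 0) ∧ Nonempty (CentralOrderInCliffWitness 𝒜 n)

/-! For homogeneous `l ∈ L` and `b = x v a`, the relation `v [l, b] v = 0` together with
`v b l v = v x v (a l) v` shows that the property `v x v A v = 0` passes from homogeneous `x` to
`l x`. Hence it holds on the subalgebra generated by `L`, in particular on the dense graded ideal
`I`. Applying primeness three times gives successively `v I v = 0`, `I v = 0` and `I = 0`,
unless `v = 0`. -/

open DirectSum Pointwise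

local notation "𝓗" => (SetLike.homogeneousSubmonoid 𝒜 : Set A)

theorem DirectSum.sum_univ_decompose {ι M σ : Type*} [DecidableEq ι] [Fintype ι]
    [AddCommMonoid M] [SetLike σ M] [AddSubmonoidClass σ M] (ℳ : ι → σ) [Decomposition ℳ]
    (x : M) : ∑ k, (decompose ℳ x k : M) = x := by
  conv_rhs => rw [← (decompose ℳ).symm_apply_apply x, ← sum_univ_of (decompose ℳ x)]
  simp only [decompose_symm_sum, decompose_symm_of]

theorem NonUnitalAlgebra.adjoin_le_of_mul_mem {R B : Type*} [CommSemiring R]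
    [NonUnitalSemiring B] [Module R B] [IsScalarTower R B B] [SMulCommClass R B B]
    {s : Set B} {M : Submodule R B} (hs : s ⊆ M) (hmul : ∀ a ∈ s, ∀ m ∈ M, a * m ∈ M) :
    ∀ x ∈ adjoin R s, x ∈ M := by
  intro x hx
  suffices x ∈ M ∧ ∀ m ∈ M, x * m ∈ M from this.1
  induction hx using adjoin_induction with
  | mem a ha => exact ⟨hs ha, hmul a ha⟩
  | add a b _ _ ha hb =>
    exact ⟨add_mem ha.1 hb.1, fun m hm => add_mul a b m ▸ add_mem (ha.2 m hm) (hb.2 m hm)⟩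
  | zero => exact ⟨zero_mem M, fun m _ => (zero_mul m).symm ▸ zero_mem M⟩
  | mul a b _ _ ha hb =>
    exact ⟨ha.2 b hb.1, fun m hm => (mul_assoc a b m).symm ▸ ha.2 _ (hb.2 m hm)⟩
  | smul r a _ ha =>
    exact ⟨M.smul_mem r ha.1,
      fun m hm => (smul_mul_assoc r a m).symm ▸ M.smul_mem r (ha.2 m hm)⟩

section Graded

variable {𝒜}

theorem isGradedSub_span {S : Set A} (hS : S ⊆ 𝓗) :
    IsGradedSub 𝒜 (Submodule.span Φ S) := by
  intro k x hx
  refine (Submodule.span_le (p := (Submodule.span Φ S).comap (GradedAlgebra.proj 𝒜 k))).2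
    ?_ hx
  intro s hs
  obtain ⟨m, hm⟩ := hS hs
  simp only [SetLike.mem_coe, Submodule.mem_comap, GradedAlgebra.proj_apply]
  by_cases hmk : m = k
  · rw [← hmk, decompose_of_mem_same 𝒜 hm]
    exact Submodule.subset_span hs
  · rw [decompose_of_mem_ne 𝒜 hm hmk]
    exact zero_mem _

theorem IsGradedSub.eq_bot {M : Submodule Φ A} (hM : IsGradedSub 𝒜 M)
    (h : ∀ x ∈ M, x ∈ 𝓗 → x = 0) : M = ⊥ := by
  refine (Submodule.eq_bot_iff M).2 fun x hx => ?_
  rw [← sum_univ_decompose 𝒜 x]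
  exact Finset.sum_eq_zero fun k _ => h _ (hM k x hx) ⟨k, SetLike.coe_mem _⟩

-- Multiplying only by homogeneous elements keeps the generators homogeneous, hence the span graded.
theorem isGradedIdeal_span_homogeneous_mul_mul {S : Set A} (hS : S ⊆ 𝓗) :
    IsGradedIdeal 𝒜 (Submodule.span Φ (𝓗 * S * 𝓗)) := by
  refine ⟨isGradedSub_span fun x hx => ?_, fun c x hx => ⟨?_, ?_⟩⟩
  · obtain ⟨_, ⟨a, ha, s, hs, rfl⟩, b, hb, rfl⟩ := hx
    exact mul_mem (mul_mem ha (hS hs)) hb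
  · refine (Submodule.span_le (p := (Submodule.span Φ _).comap (LinearMap.mulLeft Φ c))).2
      ?_ hx
    rintro _ ⟨_, ⟨a, ha, s, hs, rfl⟩, b, hb, rfl⟩
    simp only [SetLike.mem_coe, Submodule.mem_comap, LinearMap.mulLeft_apply]
    rw [← sum_univ_decompose 𝒜 c, Finset.sum_mul]
    refine Submodule.sum_mem _ fun k _ => Submodule.subset_span ?_
    rw [← mul_assoc, ← mul_assoc (_ : A) a s]
    exact Set.mul_mem_mul (Set.mul_mem_mul (mul_mem ⟨k, SetLike.coe_mem _⟩ ha) hs) hb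
  · refine (Submodule.span_le (p := (Submodule.span Φ _).comap (LinearMap.mulRight Φ c))).2
      ?_ hx
    rintro _ ⟨_, ⟨a, ha, s, hs, rfl⟩, b, hb, rfl⟩
    simp only [SetLike.mem_coe, Submodule.mem_comap, LinearMap.mulRight_apply]
    rw [← sum_univ_decompose 𝒜 c, Finset.mul_sum]
    refine Submodule.sum_mem _ fun k _ => Submodule.subset_span ?_
    rw [mul_assoc (a * s)]
    exact Set.mul_mem_mul (Set.mul_mem_mul ha hs) (mul_mem hb ⟨k, SetLike.coe_mem _⟩)

theorem SuperPrime.forall_eq_zero_or_forall_eq_zero (hp : SuperPrime 𝒜) {S T : Set A}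
    (hS : S ⊆ 𝓗) (hT : T ⊆ 𝓗) (h : ∀ s ∈ S, ∀ a ∈ 𝓗, ∀ t ∈ T, s * a * t = 0) :
    (∀ s ∈ S, s = 0) ∨ (∀ t ∈ T, t = 0) := by
  have self_mem {U : Set A} {u : A} (hu : u ∈ U) : u ∈ Submodule.span Φ (𝓗 * U * 𝓗) :=
    Submodule.subset_span ⟨1 * u, Set.mul_mem_mul (one_mem _) hu, 1, one_mem _, by simp⟩
  refine (hp _ _ (isGradedIdeal_span_homogeneous_mul_mul hS)
    (isGradedIdeal_span_homogeneous_mul_mul hT) fun x hx y hy => ?_).imp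
    (fun hI s hs => by simpa [hI] using self_mem hs)
    (fun hJ t ht => by simpa [hJ] using self_mem ht)
  have hxy := Submodule.mul_mem_mul hx hy
  rw [Submodule.span_mul_span, (Submodule.span_eq_bot).2, Submodule.mem_bot] at hxy
  · exact hxy
  rintro _ ⟨_, ⟨_, ⟨a, -, s, hs, rfl⟩, b, hb, rfl⟩, _, ⟨_, ⟨c, hc, t, ht, rfl⟩, d, -, rfl⟩, rfl⟩
  calc a * s * b * (c * t * d) = a * (s * (b * c) * t) * d := by simp only [mul_assoc]
    _ = 0 := by rw [h s hs _ (mul_mem hb hc) t ht, mul_zero, zero_mul]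

end Graded

section Sandwich

variable {𝒜} {L : Submodule Φ A} {v : A} {i : ZMod 2}

theorem superComm_of_mem {a b : A} {p q : ZMod 2} (ha : a ∈ 𝒜 p) (hb : b ∈ 𝒜 q) :
    superComm 𝒜 a b = sbrak p q a b := by
  unfold superComm
  rw [Fintype.sum_eq_single p fun j hj => ?_, Fintype.sum_eq_single q fun j hj => ?_,
    decompose_of_mem_same 𝒜 ha, decompose_of_mem_same 𝒜 hb]
  · rw [decompose_of_mem_ne 𝒜 hb (Ne.symm hj)]
    simp [sbrak]
  · rw [decompose_of_mem_ne 𝒜 ha (Ne.symm hj)]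
    simp [sbrak]

theorem sandwich_mul_eq_zero_of_mem (hL : IsSuperLieIdeal 𝒜 L) (hv : v ∈ 𝒜 i)
    (hvLv : ∀ l ∈ L, v * l * v = 0) {l x : A} {p r : ZMod 2} (hl : l ∈ L) (hlp : l ∈ 𝒜 p)
    (hx : x ∈ 𝒜 r) (hxv : ∀ a, v * x * v * a * v = 0) (a : A) :
    v * (l * x) * v * a * v = 0 := by
  induction a using Decomposition.inductionOn 𝒜 with
  | zero => simp
  | @homogeneous s a =>
    have hb : x * v * a ∈ 𝒜 (r + i + s) :=
      SetLike.mul_mem_graded (SetLike.mul_mem_graded hx hv) a.2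
    have hbl : v * (x * v * a * l) * v = 0 := by
      rw [← hxv (a * l)]
      simp only [mul_assoc]
    have hcomm := hvLv _ (hL.2 l hl (x * v * a))
    rw [superComm_of_mem hlp hb, sbrak, mul_sub, sub_mul, mul_smul_comm, smul_mul_assoc, hbl,
      smul_zero, sub_zero] at hcomm
    rw [← hcomm]
    simp only [mul_assoc]
  | add a a' ha ha' => rw [mul_add, add_mul, ha, ha', add_zero]

theorem sandwich_eq_zero_of_mem_adjoin (hL : IsSuperLieIdeal 𝒜 L) (hv : v ∈ 𝒜 i)
    (hvLv : ∀ l ∈ L, v * l * v = 0) {x : A} (hx : x ∈ NonUnitalAlgebra.adjoin Φ (L : Set A))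
    (a : A) : v * x * v * a * v = 0 := by
  set M := Submodule.span Φ {y | y ∈ 𝓗 ∧ ∀ a, v * y * v * a * v = 0}
  have hM : ∀ y ∈ M, ∀ a, v * y * v * a * v = 0 := by
    intro y hy a
    induction hy using Submodule.span_induction with
    | mem y hy => exact hy.2 a
    | zero => simp
    | add y z _ _ hy hz => rw [mul_add, add_mul, add_mul, add_mul, hy, hz, add_zero]
    | smul c y _ hy => rw [mul_smul_comm, smul_mul_assoc, smul_mul_assoc, smul_mul_assoc, hy,
        smul_zero]
  have hLM : ∀ l ∈ L, ∀ y ∈ M, l * y ∈ M := by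
    intro l hl y hy
    refine (Submodule.span_le (p := M.comap (LinearMap.mulLeft Φ l))).2 ?_ hy
    rintro y ⟨⟨r, hyr⟩, hyv⟩
    simp only [SetLike.mem_coe, Submodule.mem_comap, LinearMap.mulLeft_apply]
    rw [← sum_univ_decompose 𝒜 l, Finset.sum_mul]
    exact Submodule.sum_mem _ fun p _ => Submodule.subset_span
      ⟨⟨p + r, SetLike.mul_mem_graded (SetLike.coe_mem _) hyr⟩,
        sandwich_mul_eq_zero_of_mem hL hv hvLv (hL.1 p l hl) (SetLike.coe_mem _) hyr hyv⟩
  have hLsub : (L : Set A) ⊆ M := by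
    intro l hl
    rw [SetLike.mem_coe, ← sum_univ_decompose 𝒜 l]
    refine Submodule.sum_mem _ fun p _ => Submodule.subset_span
      ⟨⟨p, SetLike.coe_mem _⟩, fun a => ?_⟩
    rw [hvLv _ (hL.1 p l hl), zero_mul, zero_mul]
  exact hM x (NonUnitalAlgebra.adjoin_le_of_mul_mem hLsub hLM x hx) a

end Sandwich

theorem eq_zero_of_vLv_eq_zero
    (hp : SuperPrime 𝒜)
    (L : Submodule Φ A) (hL : IsSuperLieIdeal 𝒜 L) (hdense : SuperDense 𝒜 L)
    (v : A) (i : ZMod 2) (hv : v ∈ 𝒜 i)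
    (hvLv : ∀ l ∈ L, v * l * v = 0) :
    v = 0 := by
  obtain ⟨I, hI, hI0, hIL⟩ := hdense
  set HI : Set A := (I : Set A) ∩ 𝓗
  have hvH : v ∈ 𝓗 := ⟨i, hv⟩
  by_contra hv0
  have hvIv : ∀ x ∈ HI, v * x * v = 0 := by
    simpa [hv0] using hp.forall_eq_zero_or_forall_eq_zero (S := (v * · * v) '' HI) (T := {v})
      (Set.image_subset_iff.2 fun x hx => mul_mem (mul_mem hvH hx.2) hvH)
      (Set.singleton_subset_iff.2 hvH) (by
        rintro _ ⟨x, hx, rfl⟩ a - _ rfl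
        exact sandwich_eq_zero_of_mem_adjoin hL hv hvLv (hIL x hx.1) a)
  have hIv : ∀ x ∈ HI, x * v = 0 := by
    simpa [hv0] using hp.forall_eq_zero_or_forall_eq_zero (S := {v}) (T := (· * v) '' HI)
      (Set.singleton_subset_iff.2 hvH)
      (Set.image_subset_iff.2 fun x hx => mul_mem hx.2 hvH) (by
        rintro s hs a ha _ ⟨x, hx, rfl⟩
        rw [Set.mem_singleton_iff.1 hs, ← mul_assoc,
          ← hvIv (a * x) ⟨(hI.2 a x hx.1).1, mul_mem ha hx.2⟩, mul_assoc v a])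
  have hIzero : ∀ x ∈ HI, x = 0 := by
    simpa [hv0] using hp.forall_eq_zero_or_forall_eq_zero (S := HI) (T := {v})
      (fun x hx => hx.2) (Set.singleton_subset_iff.2 hvH) (by
        rintro x hx a ha _ rfl
        exact hIv (x * a) ⟨(hI.2 a x hx.1).2, mul_mem hx.2 ha⟩)
  exact hI0 (hI.1.eq_bot fun x hx hxH => hIzero x ⟨hx, hxH⟩)
end

section
/- Let A be a prime nontrivial associative superalgebra over a commutative unital ring Φ with 1/2 ∈ Φ, and let L be a Lie ideal of A. Then C(L) = { x ∈ A : [x, L] = 0 } is both a graded subalgebra of A and a Lie ideal of A. -/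
/-! Basic notions for associative superalgebras (ℤ/2-graded algebras). -/

variable {Φ A : Type*} [CommRing Φ] [Ring A] [Algebra Φ A]
variable (𝒜 : ZMod 2 → Submodule Φ A) [GradedAlgebra 𝒜]

/-! Everything reduces to homogeneous elements: `L` is graded and the superbracket of homogeneous
elements is homogeneous, so an element centralizes `L` iff each of its homogeneous components
supercommutes with each homogeneous element of `L`. For homogeneous elements, the super Leibniz
rule `[uv, l] = u[v, l] ± [u, l]v` gives closure under products, and the super Jacobi identity
`[[u, b], l] = [u, [b, l]] ± [[u, l], b]`, together with `[b, l] ∈ L`, gives closure under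
brackets with `A`. -/

open DirectSum

theorem neg_one_pow_val_add_mul (i k j : ZMod 2) :
    (-1 : ℤ) ^ ((i + k).val * j.val) = (-1) ^ (i.val * j.val) * (-1) ^ (k.val * j.val) := by
  revert i k j; decide

theorem neg_one_pow_mul_val_add (i p j : ZMod 2) :
    (-1 : ℤ) ^ (i.val * (p + j).val) = (-1) ^ (i.val * p.val) * (-1) ^ (i.val * j.val) := by
  revert i p j; decide

section SuperBracketIdentities

variable {R : Type*} [Ring R]

theorem sbrak_swap (i j : ZMod 2) (a b : R) :
    sbrak i j a b = -(-1 : ℤ) ^ (i.val * j.val) • sbrak j i b a := by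
  have hsq : ((-1 : ℤ) ^ (i.val * j.val)) * (-1) ^ (i.val * j.val) = 1 := by
    rw [← mul_pow, neg_one_mul, neg_neg, one_pow]
  rw [sbrak, sbrak, mul_comm j.val, neg_smul, smul_sub, smul_smul, hsq, one_smul, neg_sub]

theorem sbrak_mul_left_eq_zero {i k j : ZMod 2} {u v l : R}
    (hu : sbrak i j u l = 0) (hv : sbrak k j v l = 0) : sbrak (i + k) j (u * v) l = 0 := by
  rw [sbrak, sub_eq_zero] at hu hv
  rw [sbrak, neg_one_pow_val_add_mul]
  linear_combination (norm := (noncomm_ring; module))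
    u * hv + ((-1 : ℤ) ^ (k.val * j.val)) • (hu * v)

theorem sbrak_sbrak_left_eq_zero {i p j : ZMod 2} {u b l : R}
    (hl : sbrak i j u l = 0) (hbl : sbrak i (p + j) u (sbrak p j b l) = 0) :
    sbrak (i + p) j (sbrak i p u b) l = 0 := by
  simp only [sbrak, sub_eq_zero, neg_one_pow_mul_val_add] at hl hbl
  simp only [sbrak, neg_one_pow_val_add_mul]
  linear_combination (norm := (noncomm_ring; module))
    hbl + ((-1 : ℤ) ^ (p.val * j.val)) • hl * b - ((-1 : ℤ) ^ (i.val * p.val)) • (b * hl)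

end SuperBracketIdentities

theorem decompose_zero_add_decompose_one (x : A) :
    (decompose 𝒜 x 0 : A) + decompose 𝒜 x 1 = x := by
  classical
  conv_rhs => rw [← sum_support_decompose 𝒜 x]
  rw [Finset.sum_subset (Finset.subset_univ _)
    fun i _ hi => by simp [DFinsupp.notMem_support_iff.mp hi]]
  exact (Fin.sum_univ_two (fun i : ZMod 2 => (decompose 𝒜 x i : A))).symm

theorem eq_zero_of_add_eq_zero_of_mem_of_ne {u v : A} {s t : ZMod 2}
    (hu : u ∈ 𝒜 s) (hv : v ∈ 𝒜 t) (hst : s ≠ t) (h : u + v = 0) : u = 0 := by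
  have hs : (decompose 𝒜 (u + v) s : A) = u := by
    rw [decompose_add, DirectSum.add_apply, Submodule.coe_add, decompose_of_mem_same 𝒜 hu,
      decompose_of_mem_ne 𝒜 hv hst.symm, add_zero]
  simpa [h] using hs.symm

theorem sbrak_mem {i j : ZMod 2} {a b : A} (ha : a ∈ 𝒜 i) (hb : b ∈ 𝒜 j) :
    sbrak i j a b ∈ 𝒜 (i + j) := by
  refine Submodule.sub_mem _ (SetLike.mul_mem_graded ha hb) (zsmul_mem ?_ _)
  simpa [add_comm] using SetLike.mul_mem_graded hb ha

theorem superComm_add_left (x x' y : A) :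
    superComm 𝒜 (x + x') y = superComm 𝒜 x y + superComm 𝒜 x' y := by
  simp only [superComm, ← Finset.sum_add_distrib]
  refine Finset.sum_congr rfl fun i _ => Finset.sum_congr rfl fun j _ => ?_
  simp only [sbrak, decompose_add, DirectSum.add_apply, Submodule.coe_add, add_mul, mul_add,
    smul_add]
  abel

theorem superComm_add_right (x y y' : A) :
    superComm 𝒜 x (y + y') = superComm 𝒜 x y + superComm 𝒜 x y' := by
  simp only [superComm, ← Finset.sum_add_distrib]
  refine Finset.sum_congr rfl fun i _ => Finset.sum_congr rfl fun j _ => ?_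
  simp only [sbrak, decompose_add, DirectSum.add_apply, Submodule.coe_add, add_mul, mul_add,
    smul_add]
  abel

theorem superComm_smul_left (r : Φ) (x y : A) :
    superComm 𝒜 (r • x) y = r • superComm 𝒜 x y := by
  simp only [superComm, Finset.smul_sum]
  refine Finset.sum_congr rfl fun i _ => Finset.sum_congr rfl fun j _ => ?_
  rw [decompose_smul, DirectSum.smul_apply, Submodule.coe_smul, sbrak, sbrak, smul_mul_assoc,
    mul_smul_comm, smul_comm _ r, smul_sub]

theorem superComm_of_mem_s9 {i j : ZMod 2} {x y : A} (hx : x ∈ 𝒜 i) (hy : y ∈ 𝒜 j) :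
    superComm 𝒜 x y = sbrak i j x y := by
  have hzero : ∀ i' j', i' ≠ i ∨ j' ≠ j →
      sbrak i' j' (decompose 𝒜 x i' : A) (decompose 𝒜 y j') = 0 := by
    rintro i' j' (hi | hj)
    · simp [decompose_of_mem_ne 𝒜 hx hi.symm, sbrak]
    · simp [decompose_of_mem_ne 𝒜 hy hj.symm, sbrak]
  rw [superComm, Finset.sum_eq_single i, Finset.sum_eq_single j,
    decompose_of_mem_same 𝒜 hx, decompose_of_mem_same 𝒜 hy]
  · exact fun j' _ hj => hzero i j' (Or.inr hj)
  · simp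
  · exact fun i' _ hi => Finset.sum_eq_zero fun j' _ => hzero i' j' (Or.inl hi)
  · simp

section Centralizer

def superCentralizer (S : Set A) : Submodule Φ A where
  carrier := {x | ∀ l ∈ S, superComm 𝒜 x l = 0}
  add_mem' hx hy l hl := by rw [superComm_add_left, hx l hl, hy l hl, add_zero]
  zero_mem' l _ := by simp [superComm, sbrak]
  smul_mem' r x hx l hl := by rw [superComm_smul_left, hx l hl, smul_zero]

variable {L : Submodule Φ A}

theorem mem_superCentralizer_iff_of_mem (hL : IsGradedSub 𝒜 L) {i : ZMod 2} {u : A}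
    (hu : u ∈ 𝒜 i) :
    u ∈ superCentralizer 𝒜 L ↔ ∀ j, ∀ l ∈ L, l ∈ 𝒜 j → sbrak i j u l = 0 := by
  refine ⟨fun h j l hl hlj => superComm_of_mem_s9 𝒜 hu hlj ▸ h l hl, fun h l hl => ?_⟩
  rw [← decompose_zero_add_decompose_one 𝒜 l, superComm_add_right,
    superComm_of_mem_s9 𝒜 hu (decompose 𝒜 l 0).2, superComm_of_mem_s9 𝒜 hu (decompose 𝒜 l 1).2,
    h 0 _ (hL 0 l hl) (decompose 𝒜 l 0).2, h 1 _ (hL 1 l hl) (decompose 𝒜 l 1).2, add_zero]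

theorem isGradedSub_superCentralizer (hL : IsGradedSub 𝒜 L) :
    IsGradedSub 𝒜 (superCentralizer 𝒜 L) := by
  intro i x hx
  rw [mem_superCentralizer_iff_of_mem 𝒜 hL (decompose 𝒜 x i).2]
  intro j l hl hlj
  have hsum := hx l hl
  rw [← decompose_zero_add_decompose_one 𝒜 x, superComm_add_left,
    superComm_of_mem_s9 𝒜 (decompose 𝒜 x 0).2 hlj, superComm_of_mem_s9 𝒜 (decompose 𝒜 x 1).2 hlj]
    at hsum
  have hdeg : (0 : ZMod 2) + j ≠ 1 + j := fun h => zero_ne_one (add_right_cancel h)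
  have h0 := eq_zero_of_add_eq_zero_of_mem_of_ne 𝒜 (sbrak_mem 𝒜 (decompose 𝒜 x 0).2 hlj)
    (sbrak_mem 𝒜 (decompose 𝒜 x 1).2 hlj) hdeg hsum
  have h1 := eq_zero_of_add_eq_zero_of_mem_of_ne 𝒜 (sbrak_mem 𝒜 (decompose 𝒜 x 1).2 hlj)
    (sbrak_mem 𝒜 (decompose 𝒜 x 0).2 hlj) hdeg.symm ((add_comm _ _).trans hsum)
  fin_cases i
  exacts [h0, h1]

theorem mul_mem_superCentralizer (hL : IsGradedSub 𝒜 L) {x y : A}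
    (hx : x ∈ superCentralizer 𝒜 L) (hy : y ∈ superCentralizer 𝒜 L) :
    x * y ∈ superCentralizer 𝒜 L := by
  have hC := isGradedSub_superCentralizer 𝒜 hL
  have homogeneous (i k : ZMod 2) :
      (decompose 𝒜 x i : A) * decompose 𝒜 y k ∈ superCentralizer 𝒜 L := by
    have hxi := (mem_superCentralizer_iff_of_mem 𝒜 hL (decompose 𝒜 x i).2).1 (hC i x hx)
    have hyk := (mem_superCentralizer_iff_of_mem 𝒜 hL (decompose 𝒜 y k).2).1 (hC k y hy)
    rw [mem_superCentralizer_iff_of_mem 𝒜 hL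
      (SetLike.mul_mem_graded (decompose 𝒜 x i).2 (decompose 𝒜 y k).2)]
    exact fun j l hl hlj => sbrak_mul_left_eq_zero (hxi j l hl hlj) (hyk j l hl hlj)
  rw [← decompose_zero_add_decompose_one 𝒜 x, ← decompose_zero_add_decompose_one 𝒜 y,
    add_mul, mul_add, mul_add]
  exact add_mem (add_mem (homogeneous 0 0) (homogeneous 0 1))
    (add_mem (homogeneous 1 0) (homogeneous 1 1))

theorem superComm_mem_superCentralizer (hL : IsSuperLieIdeal 𝒜 L) {x : A}
    (hx : x ∈ superCentralizer 𝒜 L) (a : A) : superComm 𝒜 x a ∈ superCentralizer 𝒜 L := by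
  obtain ⟨hLg, hLa⟩ := hL
  rw [superComm]
  refine Submodule.sum_mem _ fun i _ => Submodule.sum_mem _ fun p _ => ?_
  have hu := (mem_superCentralizer_iff_of_mem 𝒜 hLg (decompose 𝒜 x i).2).1
    (isGradedSub_superCentralizer 𝒜 hLg i x hx)
  rw [mem_superCentralizer_iff_of_mem 𝒜 hLg
    (sbrak_mem 𝒜 (decompose 𝒜 x i).2 (decompose 𝒜 a p).2)]
  intro j l hl hlj
  have hbl : sbrak p j (decompose 𝒜 a p : A) l ∈ L := by
    rw [sbrak_swap, ← superComm_of_mem_s9 𝒜 hlj (decompose 𝒜 a p).2]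
    exact zsmul_mem (hLa l hl _) _
  exact sbrak_sbrak_left_eq_zero (hu j l hl hlj)
    (hu _ _ hbl (sbrak_mem 𝒜 (decompose 𝒜 a p).2 hlj))

end Centralizer

theorem centralizer_isGradedSubalg_and_lieIdeal
    (L : Submodule Φ A) (hL : IsSuperLieIdeal 𝒜 L) :
    ∃ C : Submodule Φ A,
      (C : Set A) = {x : A | ∀ l ∈ L, superComm 𝒜 x l = 0} ∧
      IsGradedSubalg 𝒜 C ∧ IsSuperLieIdeal 𝒜 C :=
  have hC := isGradedSub_superCentralizer 𝒜 hL.1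
  ⟨superCentralizer 𝒜 L, rfl, ⟨hC, fun _ hx _ hy => mul_mem_superCentralizer 𝒜 hL.1 hx hy⟩,
    hC, fun _ hx a => superComm_mem_superCentralizer 𝒜 hL hx a⟩
end
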